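/- arXiv:2310.07474 — 3 statements merged into one kernel-verified Lean document; each statement's English description precedes it below -/
import Mathlib

section
/- Let B be a hypercentral left skew brace and let I be a nonzero ideal of B. Then I ∩ ζ(B) ≠ 0. -/
universe u

/-- A left skew brace: a set with two group structures `(B,+)` and `(B,·)` sharing the
same identity element, satisfying `a·(b+c) = a·b - a + a·c`. -/
class SkewBrace (B : Type u) extends AddGroup B, Group B where
  zero_eq_one : (0 : B) = 1
  skew_distrib : ∀ a b c : B, a * (b + c) = a * b + (-a + a * c)

namespace SkewBrace

variable {B : Type u} [SkewBrace B]

/-- The star product `a ∗ b = -a + a·b - b`. -/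
def sbStar (a b : B) : B := -a + a * b + -b

/-- The additive commutator `[a,b]₊ = -a - b + a + b`. -/
def addCommutator (a b : B) : B := -a + -b + a + b

/-- The multiplicative commutator `[a,b]· = a⁻¹b⁻¹ab`. -/
def mulCommutator (a b : B) : B := a⁻¹ * b⁻¹ * a * b

/-- A subbrace: a subset that is a subgroup of both `(B,+)` and `(B,·)`. -/
structure IsSubbrace (S : Set B) : Prop where
  zero_mem : (0 : B) ∈ S
  add_mem : ∀ ⦃a b : B⦄, a ∈ S → b ∈ S → a + b ∈ S
  neg_mem : ∀ ⦃a : B⦄, a ∈ S → -a ∈ S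
  mul_mem : ∀ ⦃a b : B⦄, a ∈ S → b ∈ S → a * b ∈ S
  inv_mem : ∀ ⦃a : B⦄, a ∈ S → a⁻¹ ∈ S

/-- `J` is an ideal of the subbrace `S`: a subbrace of `S`, normal in `(S,+)` and
`(S,·)`, with `S ∗ J ⊆ J` and `J ∗ S ⊆ J`. -/
structure IsIdealIn (S J : Set B) : Prop where
  subset : J ⊆ S
  isSubbrace : IsSubbrace J
  add_conj_mem : ∀ ⦃b : B⦄, b ∈ S → ∀ ⦃a : B⦄, a ∈ J → b + a + -b ∈ J
  mul_conj_mem : ∀ ⦃b : B⦄, b ∈ S → ∀ ⦃a : B⦄, a ∈ J → b * a * b⁻¹ ∈ J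
  star_mem_left : ∀ ⦃b : B⦄, b ∈ S → ∀ ⦃a : B⦄, a ∈ J → sbStar b a ∈ J
  star_mem_right : ∀ ⦃a : B⦄, a ∈ J → ∀ ⦃b : B⦄, b ∈ S → sbStar a b ∈ J

/-- An ideal of the brace `B`. -/
def IsIdeal (J : Set B) : Prop := IsIdealIn (Set.univ : Set B) J

/-- A left ideal: a subbrace `L` with `B ∗ L ⊆ L`. -/
structure IsLeftIdeal (L : Set B) : Prop where
  isSubbrace : IsSubbrace L
  star_mem_left : ∀ (b : B), ∀ ⦃a : B⦄, a ∈ L → sbStar b a ∈ L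

/-- The ideal of `B` generated by a subset `E`. -/
def idealClosure (E : Set B) : Set B := ⋂₀ {I : Set B | IsIdeal I ∧ E ⊆ I}

/-- The subbrace of `B` generated by a subset `E`. -/
def subbraceClosure (E : Set B) : Set B := ⋂₀ {S : Set B | IsSubbrace S ∧ E ⊆ S}

/-- The set `X_{I,J} = [I,J]₊ ∪ [I,J]· ∪ {i·j - (i+j) : i ∈ I, j ∈ J}`. -/
def commSet (I J : Set B) : Set B :=
  (AddSubgroup.closure {x : B | ∃ i ∈ I, ∃ j ∈ J, x = addCommutator i j} : Set B) ∪
    (Subgroup.closure {x : B | ∃ i ∈ I, ∃ j ∈ J, x = mulCommutator i j} : Set B) ∪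
    {x : B | ∃ i ∈ I, ∃ j ∈ J, x = i * j + -(i + j)}

/-- The commutator ideal `[I,J]^B`: the ideal of `B` generated by `X_{I,J}`. -/
def commIdeal (I J : Set B) : Set B := idealClosure (commSet I J)

/-- The set `X ∗ Y = {x ∗ y : x ∈ X, y ∈ Y}`. -/
def starSet (X Y : Set B) : Set B := {z : B | ∃ x ∈ X, ∃ y ∈ Y, z = sbStar x y}

/-- The centre of the subbrace `S`. -/
def centreIn (S : Set B) : Set B :=
  {a ∈ S | ∀ b ∈ S, a + b = b + a ∧ a + b = a * b ∧ a + b = b * a}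

/-- The centre `ζ(B)` of the brace `B`. -/
def centre (B : Type u) [SkewBrace B] : Set B := centreIn (Set.univ : Set B)

/-- For ideals `J ≤ I` of the subbrace `S`: `I/J` is a central factor of `S`,
i.e. `I/J ≤ ζ(S/J)`. -/
def IsCentralFactorIn (S J I : Set B) : Prop :=
  ∀ ⦃a : B⦄, a ∈ I → ∀ ⦃b : B⦄, b ∈ S →
    -(a + b) + (b + a) ∈ J ∧ -(a + b) + a * b ∈ J ∧ -(a + b) + b * a ∈ J

/-- The subbrace `S` is centrally nilpotent of class at most `n`: there is a chain of
ideals `0 = I₀ ≤ I₁ ≤ … ≤ Iₙ = S` of `S` with `I_{k+1}/I_k ≤ ζ(S/I_k)`. -/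
def CentrallyNilpotentInOfClassLE (S : Set B) (n : ℕ) : Prop :=
  ∃ I : ℕ → Set B, I 0 = {0} ∧ I n = S ∧
    (∀ k ≤ n, IsIdealIn S (I k)) ∧
    (∀ k < n, I k ⊆ I (k + 1)) ∧
    (∀ k < n, IsCentralFactorIn S (I k) (I (k + 1)))

/-- The subbrace `S` is centrally nilpotent. -/
def CentrallyNilpotentIn (S : Set B) : Prop := ∃ n : ℕ, CentrallyNilpotentInOfClassLE S n

/-- The brace `B` is centrally nilpotent. -/
def CentrallyNilpotent (B : Type u) [SkewBrace B] : Prop :=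
  CentrallyNilpotentIn (Set.univ : Set B)

/-- The brace `B` is locally centrally-nilpotent: every finitely generated subbrace is
centrally nilpotent. -/
def LocallyCentrallyNilpotent (B : Type u) [SkewBrace B] : Prop :=
  ∀ E : Finset B, CentrallyNilpotentIn (subbraceClosure (E : Set B))

/-- The (finite) upper central series of `B`: `ζ₀(B) = 0` and
`ζ_{n+1}(B)/ζ_n(B) = ζ(B/ζ_n(B))`. -/
def zetaNat (B : Type u) [SkewBrace B] : ℕ → Set B
  | 0 => {0}
  | n + 1 =>
    {a : B | ∀ b : B, -(a + b) + (b + a) ∈ zetaNat B n ∧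
      -(a + b) + a * b ∈ zetaNat B n ∧ -(a + b) + b * a ∈ zetaNat B n}

/-- The transfinite upper central series of `B`. -/
noncomputable def zetaOrd (B : Type u) [SkewBrace B] (o : Ordinal.{u}) : Set B :=
  Ordinal.limitRecOn o ({0} : Set B)
    (fun _ Z =>
      {a : B | ∀ b : B, -(a + b) + (b + a) ∈ Z ∧ -(a + b) + a * b ∈ Z ∧ -(a + b) + b * a ∈ Z})
    (fun o _ ih => ⋃ (β : {β : Ordinal.{u} // β < o}), ih β.1 β.2)

/-- The brace `B` is hypercentral: the upper central series reaches `B`. -/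
def Hypercentral (B : Type u) [SkewBrace B] : Prop :=
  ∃ o : Ordinal.{u}, zetaOrd B o = Set.univ

/-- The largest ideal of `B` contained in `C`. -/
def idealCore (C : Set B) : Set B := ⋃₀ {I : Set B | IsIdeal I ∧ I ⊆ C}

/-- The lower `B`-central series of an ideal `I`:
`lowerCentralB I n = Γ_{n+1}(I)^B`, so `Γ₁(I)^B = I` and `Γ_{n+1}(I)^B = [Γ_n(I)^B, I]^B`. -/
def lowerCentralB (I : Set B) : ℕ → Set B
  | 0 => I
  | n + 1 => commIdeal (lowerCentralB I n) I

/-- `I` is a `B`-centrally nilpotent ideal. -/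
def BCentrallyNilpotent (I : Set B) : Prop := ∃ n : ℕ, lowerCentralB I n = {0}

/-- The derived series of an ideal with respect to `B`. -/
def derivedB (I : Set B) : ℕ → Set B
  | 0 => I
  | n + 1 => commIdeal (derivedB I n) (derivedB I n)

/-- The preimages in `B` of the derived series of `I/F` with respect to `B/F`. -/
def derivedModB (F I : Set B) : ℕ → Set B
  | 0 => I
  | n + 1 => idealClosure (commSet (derivedModB F I n) (derivedModB F I n) ∪ F)

/-- The Fitting ideal of `B`: the ideal generated by all `B`-centrally nilpotent ideals. -/
def FitIdeal (B : Type u) [SkewBrace B] : Set B :=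
  idealClosure (⋃₀ {I : Set B | IsIdeal I ∧ BCentrallyNilpotent I})

/-- The centraliser of an ideal `I`: the largest ideal `C` with `[C,I]^B = 0`. -/
def idealCentraliser (I : Set B) : Set B :=
  ⋃₀ {C : Set B | IsIdeal C ∧ commIdeal C I ⊆ {0}}

/-- The centraliser of a chief factor `Itop/Ibot`: the largest ideal `C` of `B` with
`[C, Itop]^B ≤ Ibot`. -/
def factorCentraliser (Itop Ibot : Set B) : Set B :=
  ⋃₀ {C : Set B | IsIdeal C ∧ commIdeal C Itop ⊆ Ibot}

/-- A maximal left ideal of `B`. -/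
def IsMaximalLeftIdeal (L : Set B) : Prop :=
  IsLeftIdeal L ∧ L ≠ Set.univ ∧
    ∀ L' : Set B, IsLeftIdeal L' → L ⊆ L' → L' = L ∨ L' = Set.univ

/-- The Frattini ideal of `B`. -/
def FratIdeal (B : Type u) [SkewBrace B] : Set B :=
  (⋂₀ {L : Set B | IsMaximalLeftIdeal L}) ∩ FitIdeal B

/-- The additive torsion set `T₊(B)`. -/
def addTorsion (B : Type u) [SkewBrace B] : Set B := {a : B | ∃ n : ℕ, 0 < n ∧ n • a = 0}

/-- The multiplicative torsion set `T·(B)`. -/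
def mulTorsion (B : Type u) [SkewBrace B] : Set B := {a : B | ∃ n : ℕ, 0 < n ∧ a ^ n = 1}

/-- The order of an element of a brace: the cardinality of the subbrace it generates
(`0` if infinite). -/
noncomputable def elemOrder (a : B) : ℕ := Nat.card ↥(subbraceClosure ({a} : Set B))

/-- `a` is a `π`-element: it is periodic and its order is a `π`-number. -/
def IsPiElement (π : Set ℕ) (a : B) : Prop :=
  0 < elemOrder a ∧ ∀ p : ℕ, p.Prime → p ∣ elemOrder a → p ∈ π

/-- The order of the coset `a + J` in the quotient brace modulo the ideal `J`:
the number of cosets of `J` in the subbrace generated by `a` together with `J`. -/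
noncomputable def elemOrderMod (J : Set B) (a : B) : ℕ :=
  Nat.card ↥((fun x : B => {y : B | -x + y ∈ J}) '' subbraceClosure ({a} ∪ J))

/-- The coset of `a` modulo the ideal `J` is a `π`-element of the quotient brace. -/
def IsPiElementMod (π : Set ℕ) (J : Set B) (a : B) : Prop :=
  0 < elemOrderMod J a ∧ ∀ p : ℕ, p.Prime → p ∣ elemOrderMod J a → p ∈ π

/-- A subideal: a finite chain `S = C₀ ⊴ C₁ ⊴ … ⊴ Cₙ = B`. -/
def IsSubideal (S : Set B) : Prop :=
  ∃ (n : ℕ) (C : ℕ → Set B), C 0 = S ∧ C n = Set.univ ∧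
    (∀ k ≤ n, IsSubbrace (C k)) ∧ ∀ k < n, IsIdealIn (C (k + 1)) (C k)

/-- An ascendant subbrace: an ordinal-indexed ascending chain from `S` to `B`. -/
def IsAscendant (S : Set B) : Prop :=
  ∃ (l : Ordinal.{u}) (C : Ordinal.{u} → Set B), C 0 = S ∧ C l = Set.univ ∧
    (∀ α ≤ l, IsSubbrace (C α)) ∧
    (∀ α < l, IsIdealIn (C (α + 1)) (C α)) ∧
    ∀ μ ≤ l, Order.IsSuccLimit μ → C μ = ⋃ β < μ, C β

/-- A serial subbrace: there is a complete chain of subbraces containing `S` and `B`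
in which each member is an ideal of its immediate successor. -/
def IsSerial (S : Set B) : Prop :=
  ∃ 𝒞 : Set (Set B), S ∈ 𝒞 ∧ Set.univ ∈ 𝒞 ∧
    (∀ D ∈ 𝒞, IsSubbrace D) ∧
    (∀ D ∈ 𝒞, ∀ E ∈ 𝒞, D ⊆ E ∨ E ⊆ D) ∧
    (∀ 𝒟 ⊆ 𝒞, 𝒟.Nonempty → ⋃₀ 𝒟 ∈ 𝒞 ∧ ⋂₀ 𝒟 ∈ 𝒞) ∧
    ∀ D ∈ 𝒞, ∀ E ∈ 𝒞, D ⊂ E → (∀ F ∈ 𝒞, ¬(D ⊂ F ∧ F ⊂ E)) → IsIdealIn E D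

/-- `S` is a maximal `p`-subgroup of `(B,+)`. -/
def IsMaxAddPSubgroup (p : ℕ) (S : AddSubgroup B) : Prop :=
  (∀ a ∈ S, ∃ k : ℕ, p ^ k • a = 0) ∧
    ∀ T : AddSubgroup B, (∀ a ∈ T, ∃ k : ℕ, p ^ k • a = 0) → S ≤ T → T = S

/-- `S` is a maximal `p`-subgroup of `(B,·)`. -/
def IsMaxMulPSubgroup (p : ℕ) (S : Subgroup B) : Prop :=
  (∀ a ∈ S, ∃ k : ℕ, a ^ p ^ k = 1) ∧
    ∀ T : Subgroup B, (∀ a ∈ T, ∃ k : ℕ, a ^ p ^ k = 1) → S ≤ T → T = S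

/-- Formal 2-polynomials of a brace: terms in two variables built from `+`, `-`, `·`,
inverse and the constant `0`. -/
inductive Poly2 : Type
  | X : Poly2
  | Y : Poly2
  | zero : Poly2
  | add : Poly2 → Poly2 → Poly2
  | neg : Poly2 → Poly2
  | mul : Poly2 → Poly2 → Poly2
  | inv : Poly2 → Poly2

/-- Evaluation of a formal 2-polynomial in a brace. -/
def Poly2.eval : Poly2 → B → B → B
  | .X, a, _ => a
  | .Y, _, b => b
  | .zero, _, _ => 0
  | .add p q, a, b => p.eval a b + q.eval a b
  | .neg p, a, b => -(p.eval a b)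
  | .mul p q, a, b => p.eval a b * q.eval a b
  | .inv p, a, b => (p.eval a b)⁻¹

/-- A 2-polynomial is absorbing if it vanishes whenever one variable is `0`. -/
def Poly2.Absorbing (p : Poly2) (B : Type u) [SkewBrace B] : Prop :=
  (∀ x : B, p.eval x (0 : B) = 0) ∧ ∀ y : B, p.eval (0 : B) y = 0

end SkewBrace

open SkewBrace

section Aux

variable {B : Type u} [SkewBrace B]

lemma aux_x1_mem {I : Set B} (hI : IsIdeal I) {a : B} (ha : a ∈ I) (b : B) :
    -(a + b) + (b + a) ∈ I := by
  have h1 : (-b) + a + -(-b) ∈ I := hI.add_conj_mem (Set.mem_univ _) ha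
  have h2 : -((-b) + a + -(-b)) + a ∈ I :=
    hI.isSubbrace.add_mem (hI.isSubbrace.neg_mem h1) ha
  have : -(a + b) + (b + a) = -((-b) + a + -(-b)) + a := by
    simp [neg_add, add_assoc]
  rwa [this]

lemma aux_x2_mem {I : Set B} (hI : IsIdeal I) {a : B} (ha : a ∈ I) (b : B) :
    -(a + b) + a * b ∈ I := by
  have hs : sbStar a b ∈ I := hI.star_mem_right ha (Set.mem_univ b)
  have h1 : (-b) + sbStar a b + -(-b) ∈ I := hI.add_conj_mem (Set.mem_univ _) hs
  have : -(a + b) + a * b = (-b) + sbStar a b + -(-b) := by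
    simp [sbStar, neg_add, add_assoc]
  rwa [this]

lemma aux_x3_mem {I : Set B} (hI : IsIdeal I) {a : B} (ha : a ∈ I) (b : B) :
    -(a + b) + b * a ∈ I := by
  have hs : sbStar b a ∈ I := hI.star_mem_left (Set.mem_univ b) ha
  have hc : (-b) + a + -(-b) ∈ I := hI.add_conj_mem (Set.mem_univ _) ha
  have h1 : -((-b) + a + -(-b)) + sbStar b a + a ∈ I :=
    hI.isSubbrace.add_mem
      (hI.isSubbrace.add_mem (hI.isSubbrace.neg_mem hc) hs) ha
  have : -(a + b) + b * a = -((-b) + a + -(-b)) + sbStar b a + a := by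
    simp [sbStar, neg_add, add_assoc]
  rwa [this]

lemma zetaOrd_zero (B : Type u) [SkewBrace B] : zetaOrd B 0 = ({0} : Set B) :=
  Ordinal.limitRecOn_zero _ _ _

lemma zetaOrd_succ (B : Type u) [SkewBrace B] (o : Ordinal.{u}) :
    zetaOrd B (Order.succ o) =
      {a : B | ∀ b : B, -(a + b) + (b + a) ∈ zetaOrd B o ∧
        -(a + b) + a * b ∈ zetaOrd B o ∧ -(a + b) + b * a ∈ zetaOrd B o} :=
  Ordinal.limitRecOn_succ _ _ _ _

lemma zetaOrd_limit (B : Type u) [SkewBrace B] {o : Ordinal.{u}} (ho : Order.IsSuccLimit o) :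
    zetaOrd B o = ⋃ (β : {β : Ordinal.{u} // β < o}), zetaOrd B β.1 :=
  Ordinal.limitRecOn_limit _ _ _ _ ho

end Aux

/-- In a hypercentral brace, every nonzero ideal meets the centre
nontrivially. -/
theorem hypercentral_meet_centre {B : Type u} [SkewBrace B] (hB : Hypercentral B)
    (I : Set B) (hI : IsIdeal I) (hne : I ≠ ({0} : Set B)) :
    I ∩ centre B ≠ ({0} : Set B) := by
  classical
  -- There is a nonzero element of I
  obtain ⟨a0, ha0I, ha0ne⟩ : ∃ a ∈ I, a ≠ (0 : B) := by
    by_contra h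
    push_neg at h
    exact hne (Set.eq_singleton_iff_unique_mem.mpr ⟨hI.isSubbrace.zero_mem, h⟩)
  obtain ⟨o, ho⟩ := hB
  set S : Set Ordinal.{u} := {o | ∃ a, a ∈ I ∧ a ∈ zetaOrd B o ∧ a ≠ 0} with hS
  have hSne : S.Nonempty := ⟨o, a0, ha0I, by rw [ho]; trivial, ha0ne⟩
  set α := Ordinal.lt_wf.min S hSne with hα
  have hαS : α ∈ S := Ordinal.lt_wf.min_mem S hSne
  have hmin : ∀ β < α, β ∉ S := fun β hb hbS => Ordinal.lt_wf.not_lt_min S hbS hb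
  obtain ⟨a, haI, haZ, hane⟩ := hαS
  rcases Ordinal.zero_or_succ_or_isSuccLimit α with h0 | ⟨β, hβ⟩ | hlim
  · rw [h0, zetaOrd_zero] at haZ
    exact absurd haZ hane
  · -- successor case
    rw [← hβ, zetaOrd_succ] at haZ
    have hβlt : β < α := by rw [← hβ]; exact Order.lt_succ β
    have hsub : ∀ x, x ∈ I → x ∈ zetaOrd B β → x = 0 := by
      intro x hxI hxZ
      by_contra hx
      exact hmin β hβlt ⟨x, hxI, hxZ, hx⟩
    have hcen : a ∈ centre B := by
      refine ⟨Set.mem_univ a, fun b _ => ?_⟩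
      obtain ⟨h1, h2, h3⟩ := haZ b
      have e1 : -(a + b) + (b + a) = 0 := hsub _ (aux_x1_mem hI haI b) h1
      have e2 : -(a + b) + a * b = 0 := hsub _ (aux_x2_mem hI haI b) h2
      have e3 : -(a + b) + b * a = 0 := hsub _ (aux_x3_mem hI haI b) h3
      exact ⟨(neg_add_eq_zero.mp e1).symm ▸ rfl, neg_add_eq_zero.mp e2,
        neg_add_eq_zero.mp e3⟩
    intro heq
    have : a ∈ I ∩ centre B := ⟨haI, hcen⟩
    rw [heq] at this
    exact hane this
  · -- limit case
    rw [zetaOrd_limit B hlim] at haZ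
    obtain ⟨β, hβZ⟩ := Set.mem_iUnion.mp haZ
    exact absurd ⟨a, haI, hβZ, hane⟩ (hmin β.1 β.2)
end

section
/- Let B be a locally centrally-nilpotent left skew brace. Then: (1) the set T_+(B) of elements of finite additive order equals the set T_·(B) of elements of finite multiplicative order; (2) T := T_+(B) is an ideal of B; (3) the quotient brace B/T has no nonzero elements of finite additive order; (4) if B is periodic then B is locally finite. -/
universe u

namespace SkewBrace

variable {B : Type u} [SkewBrace B]

section Aux

variable {B : Type u} [SkewBrace B]

lemma one_eq_zero : (1 : B) = 0 := SkewBrace.zero_eq_one.symm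

/-- The lambda map. -/
def lam (a b : B) : B := -a + a * b

lemma mul_eq_add_lam (a b : B) : a * b = a + lam a b := by
  simp [lam]

lemma lam_add (a x y : B) : lam a (x + y) = lam a x + lam a y := by
  simp only [lam, SkewBrace.skew_distrib a x y, add_assoc]

lemma lam_zero (a : B) : lam a 0 = 0 := by
  have h := lam_add a 0 0
  simp only [add_zero] at h
  exact (add_eq_left.mp h.symm)

lemma lam_neg (a x : B) : lam a (-x) = -(lam a x) := by
  have h := lam_add a x (-x)
  simp only [add_neg_cancel, lam_zero] at h
  exact (neg_eq_of_add_eq_zero_right h.symm).symm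

lemma lam_nsmul (a x : B) (n : ℕ) : lam a (n • x) = n • lam a x := by
  induction n with
  | zero => simp [lam_zero]
  | succ k ih => rw [succ_nsmul, succ_nsmul, lam_add, ih]

lemma lam_one (b : B) : lam 1 b = b := by
  simp [lam, ← SkewBrace.zero_eq_one]

lemma lam_mul (a b c : B) : lam (a * b) c = lam a (lam b c) := by
  have : lam a (lam b c) = lam a (-b) + lam a (b * c) := by
    rw [show lam b c = -b + b * c from rfl, lam_add]
  rw [this, lam_neg]
  simp only [lam, mul_assoc, neg_add_rev, neg_neg, add_assoc, neg_add_cancel_left, add_neg_cancel_left]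

lemma lam_pow (a : B) (n : ℕ) (c : B) : lam (a ^ n) c = (lam a)^[n] c := by
  induction n generalizing c with
  | zero => simp [pow_zero, lam_one]
  | succ k ih =>
      rw [pow_succ a k, lam_mul, Function.iterate_succ_apply, ih]

lemma lam_lam_inv (a b : B) : lam a (lam a⁻¹ b) = b := by
  rw [← lam_mul, mul_inv_cancel, lam_one]

lemma lam_inv_lam (a b : B) : lam a⁻¹ (lam a b) = b := by
  rw [← lam_mul, inv_mul_cancel, lam_one]

lemma add_eq_mul_lam_inv (a b : B) : a + b = a * (lam a⁻¹ b) := by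
  rw [mul_eq_add_lam, lam_lam_inv]

lemma sbStar_eq (a b : B) : sbStar a b = lam a b + -b := by
  simp [sbStar, lam, add_assoc]

lemma lam_eq_star_add (a b : B) : lam a b = sbStar a b + b := by
  rw [sbStar_eq, add_assoc, neg_add_cancel, add_zero]

end Aux
section Aux2

variable {B : Type u} [SkewBrace B]

lemma addT_zero : (0 : B) ∈ addTorsion B := ⟨1, one_pos, smul_zero 1⟩

lemma addT_neg {a : B} (h : a ∈ addTorsion B) : -a ∈ addTorsion B := by
  obtain ⟨n, hn, h0⟩ := h
  exact ⟨n, hn, by rw [neg_nsmul, h0, neg_zero]⟩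

lemma nsmul_conj (b a : B) (n : ℕ) : n • (b + a + -b) = b + n • a + -b := by
  induction n with
  | zero => simp
  | succ k ih =>
      rw [succ_nsmul, succ_nsmul, ih]
      simp only [add_assoc, neg_add_cancel_left]

lemma addT_conj {a : B} (b : B) (h : a ∈ addTorsion B) : b + a + -b ∈ addTorsion B := by
  obtain ⟨n, hn, h0⟩ := h
  exact ⟨n, hn, by rw [nsmul_conj, h0, add_zero, add_neg_cancel]⟩

lemma addT_conj' {a : B} (b : B) (h : a ∈ addTorsion B) : -b + a + b ∈ addTorsion B := by
  have := addT_conj (-b) h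
  rwa [neg_neg] at this

/-- torsion is preserved by any additive homomorphism -/
lemma addT_map {f : B → B} (hf : ∀ x y : B, f (x + y) = f x + f y) {a : B}
    (h : a ∈ addTorsion B) : f a ∈ addTorsion B := by
  obtain ⟨n, hn, h0⟩ := h
  have hz : f 0 = 0 := by
    have := hf 0 0; simp only [add_zero] at this; exact (add_eq_left.mp this.symm)
  have hs : ∀ m : ℕ, m • f a = f (m • a) := by
    intro m; induction m with
    | zero => simp [hz]
    | succ k ih => rw [succ_nsmul, succ_nsmul, hf, ih]
  exact ⟨n, hn, by rw [hs, h0, hz]⟩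

lemma addT_lam {a : B} (b : B) (h : a ∈ addTorsion B) : lam b a ∈ addTorsion B :=
  addT_map (lam_add b) h

lemma addT_nsmul {a : B} (k : ℕ) (h : a ∈ addTorsion B) : k • a ∈ addTorsion B := by
  obtain ⟨n, hn, h0⟩ := h
  refine ⟨n, hn, ?_⟩
  rw [← mul_nsmul, Nat.mul_comm k n, mul_nsmul, h0, smul_zero]

lemma addT_div {a : B} (k : ℕ) (hk : 0 < k) (h : k • a ∈ addTorsion B) :
    a ∈ addTorsion B := by
  obtain ⟨n, hn, h0⟩ := h
  exact ⟨k * n, Nat.mul_pos hk hn, by rw [mul_nsmul, h0]⟩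

lemma mulT_pow_eq {a : B} (h : a ∈ mulTorsion B) : ∃ n : ℕ, 0 < n ∧ a ^ n = 1 := h

lemma mulT_inv {a : B} (h : a ∈ mulTorsion B) : a⁻¹ ∈ mulTorsion B := by
  obtain ⟨n, hn, h0⟩ := h
  exact ⟨n, hn, by rw [inv_pow, h0, inv_one]⟩

lemma mulT_conj {a : B} (b : B) (h : a ∈ mulTorsion B) : b * a * b⁻¹ ∈ mulTorsion B := by
  obtain ⟨n, hn, h0⟩ := h
  exact ⟨n, hn, by rw [conj_pow, h0, mul_one, mul_inv_cancel]⟩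

/-- subbraces -/
lemma isSubbrace_univ : IsSubbrace (Set.univ : Set B) := by
  constructor <;> intros <;> trivial

lemma isSubbrace_sInter {𝒮 : Set (Set B)} (h : ∀ S ∈ 𝒮, IsSubbrace S) :
    IsSubbrace (⋂₀ 𝒮) := by
  constructor
  · exact fun S hS => (h S hS).zero_mem
  · exact fun a b ha hb S hS => (h S hS).add_mem (ha S hS) (hb S hS)
  · exact fun a ha S hS => (h S hS).neg_mem (ha S hS)
  · exact fun a b ha hb S hS => (h S hS).mul_mem (ha S hS) (hb S hS)
  · exact fun a ha S hS => (h S hS).inv_mem (ha S hS)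

lemma subbraceClosure_isSubbrace (E : Set B) : IsSubbrace (subbraceClosure E) :=
  isSubbrace_sInter (fun _ hS => hS.1)

lemma subset_subbraceClosure (E : Set B) : E ⊆ subbraceClosure E :=
  fun x hx S hS => hS.2 hx

lemma subbraceClosure_le {E S : Set B} (hS : IsSubbrace S) (hE : E ⊆ S) :
    subbraceClosure E ⊆ S :=
  Set.sInter_subset_of_mem ⟨hS, hE⟩

lemma IsSubbrace.nsmul_mem {S : Set B} (hS : IsSubbrace S) {a : B} (ha : a ∈ S) (n : ℕ) :
    n • a ∈ S := by
  induction n with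
  | zero => simpa using hS.zero_mem
  | succ k ih => rw [succ_nsmul]; exact hS.add_mem ih ha

lemma IsSubbrace.pow_mem {S : Set B} (hS : IsSubbrace S) {a : B} (ha : a ∈ S) (n : ℕ) :
    a ^ n ∈ S := by
  induction n with
  | zero => rw [pow_zero, one_eq_zero]; exact hS.zero_mem
  | succ k ih => rw [pow_succ]; exact hS.mul_mem ih ha

lemma IsSubbrace.lam_mem {S : Set B} (hS : IsSubbrace S) {a b : B} (ha : a ∈ S) (hb : b ∈ S) :
    lam a b ∈ S :=
  hS.add_mem (hS.neg_mem ha) (hS.mul_mem ha hb)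

/-- ideal facts -/
lemma IsIdealIn.conj_mem' {S J : Set B} (hS : IsSubbrace S) (h : IsIdealIn S J)
    {b : B} (hb : b ∈ S) {a : B} (ha : a ∈ J) : -b + a + b ∈ J := by
  have := h.add_conj_mem (hS.neg_mem hb) ha
  rwa [neg_neg] at this

lemma IsIdealIn.lam_mem {S J : Set B} (h : IsIdealIn S J) {b : B} (hb : b ∈ S)
    {a : B} (ha : a ∈ J) : lam b a ∈ J := by
  rw [lam_eq_star_add]
  exact h.isSubbrace.add_mem (h.star_mem_left hb ha) ha

lemma IsIdealIn.mul_conj_mem' {S J : Set B} (hS : IsSubbrace S) (h : IsIdealIn S J)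
    {b : B} (hb : b ∈ S) {a : B} (ha : a ∈ J) : b⁻¹ * a * b ∈ J := by
  have := h.mul_conj_mem (hS.inv_mem hb) ha
  rwa [inv_inv] at this

end Aux2
section Aux3

variable {B : Type u} [SkewBrace B]

/-- Convenience bundling of a central chain for `S`. -/
structure ChainCtx (S : Set B) (I : ℕ → Set B) (m : ℕ) : Prop where
  hsub : IsSubbrace S
  h0 : I 0 = {0}
  hm : I m = S
  hid : ∀ k ≤ m, IsIdealIn S (I k)
  hmono : ∀ k < m, I k ⊆ I (k+1)
  hcent : ∀ k < m, IsCentralFactorIn S (I k) (I (k+1))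

namespace ChainCtx

variable {S : Set B} {I : ℕ → Set B} {m : ℕ}

lemma ofClassLE (hsub : IsSubbrace S) (h : CentrallyNilpotentInOfClassLE S m) :
    ∃ I : ℕ → Set B, ChainCtx S I m := by
  obtain ⟨I, h0, hm, hid, hmono, hcent⟩ := h
  exact ⟨I, hsub, h0, hm, hid, hmono, hcent⟩

lemma Isub (hc : ChainCtx S I m) {k : ℕ} (hk : k ≤ m) : I k ⊆ S :=
  (hc.hid k hk).subset

lemma Isubbrace (hc : ChainCtx S I m) {k : ℕ} (hk : k ≤ m) : IsSubbrace (I k) :=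
  (hc.hid k hk).isSubbrace

lemma mono' (hc : ChainCtx S I m) {k k' : ℕ} (h : k ≤ k') (h' : k' ≤ m) :
    I k ⊆ I k' := by
  induction k' with
  | zero => simp_all
  | succ j ih =>
      rcases Nat.lt_or_ge k (j+1) with hlt | hge
      · exact (ih (Nat.lt_succ_iff.mp hlt) (le_trans (Nat.le_succ j) h')).trans
          (hc.hmono j (Nat.lt_of_succ_le h'))
      · have : k = j + 1 := le_antisymm h hge
        subst this; rfl

lemma cf1 (hc : ChainCtx S I m) {k : ℕ} (hk : k < m) {α β : B}
    (hα : α ∈ I (k+1)) (hβ : β ∈ S) : -(α + β) + (β + α) ∈ I k :=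
  ((hc.hcent k hk) hα hβ).1

lemma cf2 (hc : ChainCtx S I m) {k : ℕ} (hk : k < m) {α β : B}
    (hα : α ∈ I (k+1)) (hβ : β ∈ S) : -(α + β) + α * β ∈ I k :=
  ((hc.hcent k hk) hα hβ).2.1

lemma cf3 (hc : ChainCtx S I m) {k : ℕ} (hk : k < m) {α β : B}
    (hα : α ∈ I (k+1)) (hβ : β ∈ S) : -(α + β) + β * α ∈ I k :=
  ((hc.hcent k hk) hα hβ).2.2

/-- `[β,α]₊ ∈ I k` for `α ∈ I (k+1)`. -/
lemma dcomm (hc : ChainCtx S I m) {k : ℕ} (hk : k < m) {α β : B}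
    (hα : α ∈ I (k+1)) (hβ : β ∈ S) : addCommutator β α ∈ I k := by
  have h := hc.cf1 hk hα hβ
  have : -(α + β) + (β + α) = addCommutator β α := by
    simp [addCommutator, neg_add_rev, add_assoc]
  rwa [this] at h

lemma dcomm' (hc : ChainCtx S I m) {k : ℕ} (hk : k < m) {α β : B}
    (hα : α ∈ I (k+1)) (hβ : β ∈ S) : addCommutator α β ∈ I k := by
  have h := (hc.Isubbrace (le_of_lt hk)).neg_mem (hc.dcomm hk hα hβ)
  have : -(addCommutator β α) = addCommutator α β := by
    simp [addCommutator, neg_add_rev, add_assoc]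
  rwa [this] at h

/-- `-α + λ_β α ∈ I k` for `α ∈ I (k+1)`, `β ∈ S`. -/
lemma lam_drop (hc : ChainCtx S I m) {k : ℕ} (hk : k < m) {α β : B}
    (hα : α ∈ I (k+1)) (hβ : β ∈ S) : -α + lam β α ∈ I k := by
  have h₃ := hc.cf3 hk hα hβ
  have key : -α + lam β α = addCommutator α β + (-(α + β) + β * α) := by
    simp [lam, addCommutator, neg_add_rev, add_assoc]
  rw [key]
  exact (hc.Isubbrace (le_of_lt hk)).add_mem (hc.dcomm' hk hα hβ) h₃

/-- restriction of the chain to `I m` when total length is `m+1`. -/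
lemma restrict (hc : ChainCtx S I (m+1)) : ChainCtx (I m) I m := by
  have hIm : IsIdealIn S (I m) := hc.hid m (Nat.le_succ m)
  refine ⟨hIm.isSubbrace, hc.h0, rfl, ?_, ?_, ?_⟩
  · intro k hk
    have hkS := hc.hid k (le_trans hk (Nat.le_succ m))
    refine ⟨hc.mono' hk (Nat.le_succ m), hkS.isSubbrace, ?_, ?_, ?_, ?_⟩
    · exact fun b hb a ha => hkS.add_conj_mem (hIm.subset hb) ha
    · exact fun b hb a ha => hkS.mul_conj_mem (hIm.subset hb) ha
    · exact fun b hb a ha => hkS.star_mem_left (hIm.subset hb) ha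
    · exact fun a ha b hb => hkS.star_mem_right ha (hIm.subset hb)
  · exact fun k hk => hc.hmono k (lt_trans hk (Nat.lt_succ_self m))
  · intro k hk a ha b hb
    exact hc.hcent k (lt_trans hk (Nat.lt_succ_self m)) ha (hIm.subset hb)

end ChainCtx

lemma iter_add {f : B → B} (hf : ∀ x y : B, f (x + y) = f x + f y) :
    ∀ (x : B), f 0 = 0 ∧ f (-x) = -(f x) := by
  intro x
  have hz : f 0 = 0 := by
    have := hf 0 0; simp only [add_zero] at this; exact (add_eq_left.mp this.symm)
  refine ⟨hz, ?_⟩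
  have := hf x (-x)
  rw [add_neg_cancel, hz] at this
  exact (neg_eq_of_add_eq_zero_right this.symm).symm

lemma iter_hom {f : B → B} (hf : ∀ x y : B, f (x + y) = f x + f y) (i : ℕ) :
    ∀ x y : B, f^[i] (x + y) = f^[i] x + f^[i] y := by
  induction i with
  | zero => intro x y; simp
  | succ j ih =>
      intro x y
      rw [Function.iterate_succ_apply', Function.iterate_succ_apply',
        Function.iterate_succ_apply', ih, hf]

lemma iter_neg {f : B → B} (hf : ∀ x y : B, f (x + y) = f x + f y) (i : ℕ) (x : B) :
    f^[i] (-x) = -(f^[i] x) := by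
  induction i with
  | zero => simp
  | succ j ih =>
      rw [Function.iterate_succ_apply', Function.iterate_succ_apply', ih,
        (iter_add hf (f^[j] x)).2]

/-- The core descending induction: if `f` is an additive endomorphism preserving the
chain and torsion, acting trivially modulo each step, with `f^N = id`, and torsion
elements of `J` are closed under addition, then `-v + f v` is torsion for `v ∈ I k`. -/
lemma D_ind {S : Set B} {I : ℕ → Set B} {m : ℕ} (hc : ChainCtx S I m)
    (J : Set B) (hJsub : IsSubbrace J) (hJ : ∀ k < m, I k ⊆ J)
    (hJconj : ∀ b ∈ S, ∀ z ∈ J, b + z + -b ∈ J)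
    (hTJadd : ∀ x y : B, x ∈ addTorsion B → x ∈ J → y ∈ addTorsion B → y ∈ J →
      x + y ∈ addTorsion B)
    (f : B → B) (hfadd : ∀ x y : B, f (x + y) = f x + f y)
    (hfI : ∀ k ≤ m, ∀ v ∈ I k, f v ∈ I k)
    (hdrop : ∀ k < m, ∀ v ∈ I (k+1), -v + f v ∈ I k)
    (hfT : ∀ t ∈ addTorsion B, f t ∈ addTorsion B)
    (hfJ : ∀ z ∈ J, f z ∈ J)
    (N : ℕ) (hN : 0 < N) (hfN : ∀ z : B, f^[N] z = z) :
    ∀ k ≤ m, ∀ v ∈ I k, -v + f v ∈ addTorsion B := by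
  intro k
  induction k with
  | zero =>
      intro _ v hv
      rw [hc.h0] at hv
      rcases hv with rfl
      rw [(iter_add hfadd 0).1, neg_zero, add_zero]
      exact addT_zero
  | succ k IH =>
      intro hk1 v hv
      have hkm : k < m := Nat.lt_of_succ_le hk1
      have hkS : I k ⊆ S := hc.Isub (le_of_lt hkm)
      have hIkbr : IsSubbrace (I k) := hc.Isubbrace (le_of_lt hkm)
      set w := -v + f v with hw_def
      have hw : w ∈ I k := hdrop k hkm v hv
      have hwJ : w ∈ J := hJ k hkm hw
      have hwS : w ∈ S := hkS hw
      have hδT : -w + f w ∈ addTorsion B := IH (le_of_lt hkm) w hw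
      have hδJ : -w + f w ∈ J :=
        hJ k hkm (hIkbr.add_mem (hIkbr.neg_mem hw) (hfI k (le_of_lt hkm) w hw))
      -- f^[i] w = w + t with t torsion in J
      have claim2 : ∀ i : ℕ, ∃ t : B, t ∈ addTorsion B ∧ t ∈ J ∧ f^[i] w = w + t := by
        intro i
        induction i with
        | zero => exact ⟨0, addT_zero, hJsub.zero_mem, (add_zero w).symm⟩
        | succ i ih =>
            obtain ⟨t, htT, htJ, hteq⟩ := ih
            refine ⟨(-w + f w) + f t, hTJadd _ _ hδT hδJ (hfT t htT) (hfJ t htJ), ?_, ?_⟩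
            · exact hJsub.add_mem hδJ (hfJ t htJ)
            · rw [Function.iterate_succ_apply', hteq, hfadd]
              simp only [add_assoc, add_neg_cancel_left]
      -- -v + f^[i] v = i•w + t with t torsion in J
      have claim3 : ∀ i : ℕ, ∃ t : B, t ∈ addTorsion B ∧ t ∈ J ∧
          -v + f^[i] v = i • w + t := by
        intro i
        induction i with
        | zero => exact ⟨0, addT_zero, hJsub.zero_mem, by simp⟩
        | succ i ih =>
            obtain ⟨t, htT, htJ, hteq⟩ := ih
            obtain ⟨ti, htiT, htiJ, htieq⟩ := claim2 i
            have key : -v + f^[i+1] v = (-v + f^[i] v) + f^[i] w := by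
              rw [hw_def, iter_hom hfadd, iter_neg hfadd, ← Function.iterate_succ_apply]
              simp only [add_assoc, neg_add_cancel_left, add_neg_cancel_left]
            refine ⟨(-w + t + w) + ti, hTJadd _ _ (addT_conj' w htT) ?_ htiT htiJ, ?_, ?_⟩
            · have := hJconj (-w) (hc.hsub.neg_mem hwS) t htJ
              rwa [neg_neg] at this
            · refine hJsub.add_mem ?_ htiJ
              have := hJconj (-w) (hc.hsub.neg_mem hwS) t htJ
              rwa [neg_neg] at this
            · rw [key, hteq, htieq, succ_nsmul]
              simp only [add_assoc, add_neg_cancel_left, neg_add_cancel_left]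
      obtain ⟨t, htT, htJ, hteq⟩ := claim3 N
      rw [hfN v, neg_add_cancel] at hteq
      have hNw : N • w = -t := eq_neg_of_add_eq_zero_left hteq.symm
      have : N • w ∈ addTorsion B := hNw ▸ addT_neg htT
      exact addT_div N hN this

end Aux3
section Aux4

variable {B : Type u} [SkewBrace B]

lemma add_nsmul_self (a : B) (j : ℕ) : a + j • a = (j+1) • a := by
  rw [succ_nsmul, ((AddCommute.refl a).nsmul_right j).eq]

/-- The grand induction on the nilpotency class. -/
lemma grand : ∀ m : ℕ, ∀ S : Set B, IsSubbrace S → CentrallyNilpotentInOfClassLE S m →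
    (∀ x ∈ S, ∀ y ∈ S, x ∈ addTorsion B → y ∈ addTorsion B → x + y ∈ addTorsion B) ∧
    (∀ x ∈ S, (x ∈ addTorsion B ↔ x ∈ mulTorsion B)) ∧
    (∀ a ∈ S, a ∈ addTorsion B → ∀ b ∈ S, sbStar a b ∈ addTorsion B) := by
  intro m
  induction m with
  | zero =>
      intro S _ hclass
      obtain ⟨I, h0, hm, _, _, _⟩ := hclass
      have hS : S = {0} := by rw [← hm, h0]
      subst hS
      have hmul0 : (0:B) * 0 = 0 := by
        rw [← one_eq_zero]; exact one_mul 1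
      refine ⟨?_, ?_, ?_⟩
      · rintro x rfl y rfl _ _; rw [add_zero]; exact addT_zero
      · rintro x rfl
        exact ⟨fun _ => ⟨1, one_pos, by rw [pow_one, ← one_eq_zero]⟩, fun _ => addT_zero⟩
      · rintro a rfl _ b rfl
        rw [sbStar, hmul0]
        simpa using addT_zero
  | succ m IH =>
      intro S hsub hclass
      obtain ⟨I, hc⟩ := ChainCtx.ofClassLE hsub hclass
      have hcJ := hc.restrict
      obtain ⟨IH1, IH2, IH3⟩ := IH (I m) hcJ.hsub ⟨I, hcJ.h0, hcJ.hm, hcJ.hid, hcJ.hmono, hcJ.hcent⟩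
      set J := I m with hJdef
      have hJid : IsIdealIn S J := hc.hid m (Nat.le_succ m)
      have hJsub' : IsSubbrace J := hJid.isSubbrace
      have hJsup : ∀ k < m + 1, I k ⊆ J :=
        fun k hk => hc.mono' (Nat.lt_succ_iff.mp hk) (Nat.le_succ m)
      have hJconj : ∀ b ∈ S, ∀ z ∈ J, b + z + -b ∈ J := fun b hb z hz =>
        hJid.add_conj_mem hb hz
      have hTJadd : ∀ x y : B, x ∈ addTorsion B → x ∈ J → y ∈ addTorsion B → y ∈ J →
          x + y ∈ addTorsion B := fun x y hxT hxJ hyT hyJ => IH1 x hxJ y hyJ hxT hyT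
      have hmlt : m < m + 1 := Nat.lt_succ_self m
      have hStop : S = I (m+1) := hc.hm.symm
      -- L1 : commutators with a torsion element are torsion
      have L1 : ∀ x ∈ S, x ∈ addTorsion B → ∀ v ∈ S, addCommutator v x ∈ addTorsion B := by
        intro x hxS hxT v hvS
        obtain ⟨n, hn, hx0⟩ := hxT
        set f : B → B := fun z => -x + z + x with hfdef
        have hfadd : ∀ u v : B, f (u + v) = f u + f v := by
          intro u v
          simp only [hfdef, add_assoc, neg_add_cancel_left, add_neg_cancel_left]
        have hiter : ∀ (i : ℕ) (z : B), f^[i] z = -(i • x) + z + i • x := by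
          intro i
          induction i with
          | zero => intro z; simp
          | succ j ihj =>
              intro z
              rw [Function.iterate_succ_apply', ihj, succ_nsmul]
              simp only [hfdef, neg_add_rev, add_assoc]
        have hD := D_ind hc J hJsub' hJsup hJconj hTJadd f hfadd
          (fun k hk v hv => by
            have := (hc.hid k hk).add_conj_mem (hsub.neg_mem hxS) hv
            rwa [neg_neg] at this)
          (fun k hk v hv => by
            have h := hc.dcomm' hk hv hxS
            have e : -v + f v = addCommutator v x := by
              simp only [hfdef, addCommutator, add_assoc]
            rwa [← e] at h)
          (fun t ht => addT_conj' x ht)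
          (fun z hz => hJid.conj_mem' hsub hxS hz)
          n hn
          (fun z => by rw [hiter n z, hx0, neg_zero, zero_add, add_zero])
          (m+1) (le_refl _) v (hStop ▸ hvS)
        have e : -v + f v = addCommutator v x := by
          simp only [hfdef, addCommutator, add_assoc]
        rwa [e] at hD
      -- L2 : additive closure of torsion in S
      have L2 : ∀ x ∈ S, ∀ y ∈ S, x ∈ addTorsion B → y ∈ addTorsion B →
          x + y ∈ addTorsion B := by
        intro x hxS y hyS hxT hyT
        have key : ∀ k : ℕ, ∃ t : B, t ∈ addTorsion B ∧ t ∈ J ∧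
            k • (x + y) = (k • x + k • y) + t := by
          intro k
          induction k with
          | zero => exact ⟨0, addT_zero, hJsub'.zero_mem, by simp⟩
          | succ k ih =>
              obtain ⟨t, htT, htJ, hteq⟩ := ih
              have hkyS : k • y ∈ S := hsub.nsmul_mem hyS k
              have hγT : addCommutator (k • y) x ∈ addTorsion B := L1 x hxS hxT _ hkyS
              have hγJ : addCommutator (k • y) x ∈ J := by
                refine hc.dcomm hmlt ?_ hkyS
                rw [← hStop]; exact hxS
              set γ := addCommutator (k • y) x with hγdef
              have hconxT : -x + t + x ∈ addTorsion B := addT_conj' x htT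
              have hconxJ : -x + t + x ∈ J := by
                have := hJconj (-x) (hsub.neg_mem hxS) t htJ
                rwa [neg_neg] at this
              have hinT : γ + (-x + t + x) ∈ addTorsion B := hTJadd _ _ hγT hγJ hconxT hconxJ
              have hinJ : γ + (-x + t + x) ∈ J := hJsub'.add_mem hγJ hconxJ
              refine ⟨-y + (γ + (-x + t + x)) + y, addT_conj' y hinT, ?_, ?_⟩
              · have := hJconj (-y) (hsub.neg_mem hyS) _ hinJ
                rwa [neg_neg] at this
              · rw [succ_nsmul (x+y), hteq, succ_nsmul x, succ_nsmul y, hγdef, addCommutator]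
                simp only [add_assoc, add_neg_cancel_left, neg_add_cancel_left]
        obtain ⟨n1, hn1, hx0⟩ := hxT
        obtain ⟨n2, hn2, hy0⟩ := hyT
        obtain ⟨t, htT, _, hteq⟩ := key (n1 * n2)
        have e1 : (n1 * n2) • x = 0 := by
          rw [mul_nsmul, hx0, smul_zero]
        have e2 : (n1 * n2) • y = 0 := by
          rw [Nat.mul_comm, mul_nsmul, hy0, smul_zero]
        rw [e1, e2, zero_add, zero_add] at hteq
        exact addT_div _ (Nat.mul_pos hn1 hn2) (hteq ▸ htT)
      -- L3 : lambda of a multiplicatively periodic element acts trivially mod torsion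
      have L3 : ∀ a ∈ S, ∀ N : ℕ, 0 < N → a ^ N = 1 → ∀ v ∈ S,
          -v + lam a v ∈ addTorsion B := by
        intro a haS N hN haN v hvS
        exact D_ind hc J hJsub' hJsup hJconj hTJadd (lam a) (lam_add a)
          (fun k hk u hu => (hc.hid k hk).lam_mem haS hu)
          (fun k hk u hu => hc.lam_drop hk hu haS)
          (fun t ht => addT_lam a ht)
          (fun z hz => hJid.lam_mem haS hz)
          N hN
          (fun z => by rw [← lam_pow, haN, lam_one])
          (m+1) (le_refl _) v (hStop ▸ hvS)
      -- pow_expand : powers vs multiples, given the torsion defect d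
      have pow_expand : ∀ a ∈ S, ∀ d : B, d = -a + lam a a → d ∈ addTorsion B → d ∈ J →
          ∀ j : ℕ, ∃ t : B, t ∈ addTorsion B ∧ t ∈ J ∧ a ^ j = j • a + t := by
        intro a haS d hd hdT hdJ
        have hlamaa : lam a a = a + d := by rw [hd, add_neg_cancel_left]
        have sub : ∀ j : ℕ, ∃ s : B, s ∈ addTorsion B ∧ s ∈ J ∧
            j • (a + d) = j • a + s := by
          intro j
          induction j with
          | zero => exact ⟨0, addT_zero, hJsub'.zero_mem, by simp⟩
          | succ j ih =>
              obtain ⟨s, hsT, hsJ, hseq⟩ := ih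
              have hconT : -a + s + a ∈ addTorsion B := addT_conj' a hsT
              have hconJ : -a + s + a ∈ J := by
                have := hJconj (-a) (hsub.neg_mem haS) s hsJ
                rwa [neg_neg] at this
              refine ⟨(-a + s + a) + d, hTJadd _ _ hconT hconJ hdT hdJ,
                hJsub'.add_mem hconJ hdJ, ?_⟩
              rw [succ_nsmul (a+d), hseq, succ_nsmul a]
              simp only [add_assoc, add_neg_cancel_left, neg_add_cancel_left]
        intro j
        induction j with
        | zero =>
            refine ⟨0, addT_zero, hJsub'.zero_mem, ?_⟩
            rw [pow_zero, one_eq_zero, zero_smul, add_zero]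
        | succ j ih =>
            obtain ⟨t, htT, htJ, hteq⟩ := ih
            obtain ⟨s, hsT, hsJ, hseq⟩ := sub j
            refine ⟨s + lam a t, hTJadd _ _ hsT hsJ (addT_lam a htT) (hJid.lam_mem haS htJ),
              hJsub'.add_mem hsJ (hJid.lam_mem haS htJ), ?_⟩
            rw [pow_succ' a j, mul_eq_add_lam, hteq, lam_add, lam_nsmul, hlamaa, hseq,
              ← add_assoc, ← add_assoc, add_nsmul_self]
            rw [add_assoc]
      -- L5 : additively periodic implies multiplicatively periodic
      have L5 : ∀ a ∈ S, a ∈ addTorsion B → a ∈ mulTorsion B := by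
        intro a haS haT
        have hlamS : lam a a ∈ S := hsub.lam_mem haS haS
        have hdT : -a + lam a a ∈ addTorsion B :=
          L2 (-a) (hsub.neg_mem haS) (lam a a) hlamS (addT_neg haT) (addT_lam a haT)
        have hdJ : -a + lam a a ∈ J := hc.lam_drop hmlt (hStop ▸ haS) haS
        obtain ⟨n, hn, ha0⟩ := haT
        obtain ⟨t, htT, htJ, hteq⟩ := pow_expand a haS _ rfl hdT hdJ n
        rw [ha0, zero_add] at hteq
        have htmul : t ∈ mulTorsion B := (IH2 t htJ).mp htT
        obtain ⟨K, hK, htK⟩ := htmul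
        exact ⟨n * K, Nat.mul_pos hn hK, by rw [pow_mul, hteq, htK]⟩
      -- L4 : multiplicatively periodic implies additively periodic
      have L4 : ∀ a ∈ S, a ∈ mulTorsion B → a ∈ addTorsion B := by
        intro a haS haM
        obtain ⟨N, hN, haN⟩ := haM
        have hdT : -a + lam a a ∈ addTorsion B := L3 a haS N hN haN a haS
        have hdJ : -a + lam a a ∈ J := hc.lam_drop hmlt (hStop ▸ haS) haS
        obtain ⟨t, htT, htJ, hteq⟩ := pow_expand a haS _ rfl hdT hdJ N
        rw [haN, one_eq_zero] at hteq
        have hNa : N • a = -t := eq_neg_of_add_eq_zero_left hteq.symm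
        exact addT_div N hN (hNa ▸ addT_neg htT)
      refine ⟨L2, fun x hxS => ⟨L5 x hxS, L4 x hxS⟩, ?_⟩
      -- C3 : star with torsion left argument
      intro a haS haT b hbS
      obtain ⟨N, hN, haN⟩ := L5 a haS haT
      have h := L3 a haS N hN haN b hbS
      have e : sbStar a b = b + (-b + lam a b) + -b := by
        rw [sbStar_eq]
        simp only [add_assoc, add_neg_cancel_left, neg_add_cancel_left]
      rw [e]
      exact addT_conj b h

end Aux4
section Aux5

variable {B : Type u} [SkewBrace B]

/-- congruence modulo an ideal -/
def Rz (Z : Set B) (u v : B) : Prop := -u + v ∈ Z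

variable {S Z : Set B}

lemma rz_refl (hZ : IsIdealIn S Z) (u : B) : Rz Z u u := by
  unfold Rz; rw [neg_add_cancel]; exact hZ.isSubbrace.zero_mem

lemma rz_of_eq (hZ : IsIdealIn S Z) {u v : B} (h : u = v) : Rz Z u v := by
  subst h; exact rz_refl hZ u

lemma rz_symm (hZ : IsIdealIn S Z) {u v : B} (h : Rz Z u v) : Rz Z v u := by
  unfold Rz at *
  have := hZ.isSubbrace.neg_mem h
  rwa [neg_add_rev, neg_neg] at this

lemma rz_trans (hZ : IsIdealIn S Z) {u v w : B} (h1 : Rz Z u v) (h2 : Rz Z v w) :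
    Rz Z u w := by
  unfold Rz at *
  have := hZ.isSubbrace.add_mem h1 h2
  rwa [add_assoc, add_neg_cancel_left] at this

lemma rz_mem (hZ : IsIdealIn S Z) {u v : B} (h : Rz Z u v) (hv : v ∈ Z) : u ∈ Z := by
  have := hZ.isSubbrace.add_mem hv (hZ.isSubbrace.neg_mem h)
  rwa [neg_add_rev, neg_neg, ← add_assoc, add_neg_cancel, zero_add] at this

lemma rz_memS (hsub : IsSubbrace S) (hZ : IsIdealIn S Z) {u v : B} (h : Rz Z u v)
    (hu : u ∈ S) : v ∈ S := by
  have e : v = u + (-u + v) := by rw [add_neg_cancel_left]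
  rw [e]
  exact hsub.add_mem hu (hZ.subset h)

lemma rz_addl (hZ : IsIdealIn S Z) {u v v' : B} (h : Rz Z v v') :
    Rz Z (u + v) (u + v') := by
  unfold Rz at *
  rwa [neg_add_rev, add_assoc, neg_add_cancel_left]

lemma rz_addr (hsub : IsSubbrace S) (hZ : IsIdealIn S Z) {u u' x : B} (h : Rz Z u u')
    (hx : x ∈ S) : Rz Z (u + x) (u' + x) := by
  unfold Rz at *
  have e : -(u + x) + (u' + x) = -x + (-u + u') + x := by
    simp only [neg_add_rev, add_assoc]
  rw [e]
  exact hZ.conj_mem' hsub hx h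

lemma rz_add (hsub : IsSubbrace S) (hZ : IsIdealIn S Z) {u u' v v' : B}
    (h1 : Rz Z u u') (h2 : Rz Z v v') (hv : v ∈ S) : Rz Z (u + v) (u' + v') :=
  rz_trans hZ (rz_addr hsub hZ h1 hv) (rz_addl hZ h2)

lemma rz_neg (hZ : IsIdealIn S Z) {u u' : B} (h : Rz Z u u') (hu : u ∈ S) :
    Rz Z (-u) (-u') := by
  unfold Rz at *
  rw [neg_neg, show -u' = -(-u + u') + -u from by rw [← neg_add_rev, add_neg_cancel_left],
    ← add_assoc]
  exact hZ.add_conj_mem hu (hZ.isSubbrace.neg_mem h)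

lemma rz_mull (hZ : IsIdealIn S Z) {u v v' : B} (h : Rz Z v v') (hu : u ∈ S) :
    Rz Z (u * v) (u * v') := by
  unfold Rz at *
  have e : u * v' = u * v + lam u (-v + v') := by
    have h1 := SkewBrace.skew_distrib u v (-v + v')
    rw [add_neg_cancel_left] at h1
    rw [h1]; rfl
  rw [e, neg_add_cancel_left]
  exact hZ.lam_mem hu h

lemma rz_mulr (hsub : IsSubbrace S) (hZ : IsIdealIn S Z) {u u' x : B} (h : Rz Z u u')
    (hu : u ∈ S) (hx : x ∈ S) : Rz Z (u * x) (u' * x) := by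
  obtain ⟨z₁, hz1, hz1e⟩ : ∃ z₁, z₁ ∈ Z ∧ u' = u * z₁ :=
    ⟨lam u⁻¹ (-u + u'), hZ.lam_mem (hsub.inv_mem hu) h,
      by rw [← add_eq_mul_lam_inv, add_neg_cancel_left]⟩
  have hz2 : x⁻¹ * z₁ * x ∈ Z := hZ.mul_conj_mem' hsub hx hz1
  have e : u' * x = (u * x) * (x⁻¹ * z₁ * x) := by
    rw [hz1e]; group
  rw [e]
  unfold Rz
  rw [show -(u * x) + (u * x) * (x⁻¹ * z₁ * x) = lam (u * x) (x⁻¹ * z₁ * x) from rfl]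
  exact hZ.lam_mem (hsub.mul_mem hu hx) hz2

lemma rz_mul (hsub : IsSubbrace S) (hZ : IsIdealIn S Z) {u u' v v' : B}
    (h1 : Rz Z u u') (h2 : Rz Z v v') (hu : u ∈ S) (hv : v ∈ S) :
    Rz Z (u * v) (u' * v') :=
  rz_trans hZ (rz_mulr hsub hZ h1 hu hv) (rz_mull hZ h2 (rz_memS hsub hZ h1 hu))

lemma rz_inv (hsub : IsSubbrace S) (hZ : IsIdealIn S Z) {u u' : B} (h : Rz Z u u')
    (hu : u ∈ S) : Rz Z u⁻¹ u'⁻¹ := by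
  obtain ⟨z₁, hz1, hz1e⟩ : ∃ z₁, z₁ ∈ Z ∧ u' = u * z₁ :=
    ⟨lam u⁻¹ (-u + u'), hZ.lam_mem (hsub.inv_mem hu) h,
      by rw [← add_eq_mul_lam_inv, add_neg_cancel_left]⟩
  have hz3 : u * z₁⁻¹ * u⁻¹ ∈ Z := hZ.mul_conj_mem hu (hZ.isSubbrace.inv_mem hz1)
  have e : u'⁻¹ = u⁻¹ * (u * z₁⁻¹ * u⁻¹) := by
    rw [hz1e]; group
  rw [e]
  unfold Rz
  rw [show -u⁻¹ + u⁻¹ * (u * z₁⁻¹ * u⁻¹) = lam u⁻¹ (u * z₁⁻¹ * u⁻¹) from rfl]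
  exact hZ.lam_mem (hsub.inv_mem hu) hz3

section Central

variable {L₁ : Set B}

lemma ccomm (hcf : IsCentralFactorIn S Z L₁) {α β : B} (hα : α ∈ L₁) (hβ : β ∈ S) :
    Rz Z (α + β) (β + α) := (hcf hα hβ).1

lemma cmul (hcf : IsCentralFactorIn S Z L₁) {α β : B} (hα : α ∈ L₁) (hβ : β ∈ S) :
    Rz Z (α + β) (α * β) := (hcf hα hβ).2.1

lemma cmul' (hcf : IsCentralFactorIn S Z L₁) {α β : B} (hα : α ∈ L₁) (hβ : β ∈ S) :
    Rz Z (α + β) (β * α) := (hcf hα hβ).2.2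

lemma czcomm (hcf : IsCentralFactorIn S Z L₁) {α β : B} (hα : α ∈ L₁) (hβ : β ∈ S) :
    addCommutator β α ∈ Z := by
  have h := (hcf hα hβ).1
  unfold Rz at h
  have e : -(α + β) + (β + α) = addCommutator β α := by
    simp [addCommutator, neg_add_rev, add_assoc]
  rwa [e] at h

lemma czcomm' (hZ : IsIdealIn S Z) (hcf : IsCentralFactorIn S Z L₁) {α β : B}
    (hα : α ∈ L₁) (hβ : β ∈ S) : addCommutator α β ∈ Z := by
  have h := hZ.isSubbrace.neg_mem (czcomm hcf hα hβ)
  have e : -(addCommutator β α) = addCommutator α β := by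
    simp [addCommutator, neg_add_rev, add_assoc]
  rwa [e] at h

lemma cinv (hsub : IsSubbrace S) (hL1 : IsIdealIn S L₁) (hZ : IsIdealIn S Z)
    (hcf : IsCentralFactorIn S Z L₁) {α : B} (hα : α ∈ L₁) : Rz Z (-α) α⁻¹ := by
  have h := (hcf hα (hsub.inv_mem (hL1.subset hα))).2.1
  rw [mul_inv_cancel, ← SkewBrace.zero_eq_one, add_zero] at h
  unfold Rz
  rw [neg_neg]
  have := hZ.isSubbrace.neg_mem h
  rwa [neg_neg] at this

lemma clam (hZ : IsIdealIn S Z) (hcf : IsCentralFactorIn S Z L₁) {α β : B}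
    (hα : α ∈ L₁) (hβ : β ∈ S) : Rz Z α (lam β α) := by
  have h₃ := (hcf hα hβ).2.2
  unfold Rz at *
  have key : -α + lam β α = addCommutator α β + (-(α + β) + β * α) := by
    simp [lam, addCommutator, neg_add_rev, add_assoc]
  rw [key]
  exact hZ.isSubbrace.add_mem (czcomm' hZ hcf hα hβ) h₃

lemma cmconj (hsub : IsSubbrace S) (hL1 : IsIdealIn S L₁) (hZ : IsIdealIn S Z)
    (hcf : IsCentralFactorIn S Z L₁) {α β : B} (hα : α ∈ L₁) (hβ : β ∈ S) :
    Rz Z (β⁻¹ * α * β) α := by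
  have hc : β⁻¹ * α * β ∈ L₁ := hL1.mul_conj_mem' hsub hβ hα
  have e : β * (β⁻¹ * α * β) = α * β := by group
  have h1 : Rz Z (β⁻¹ * α * β + β) (α * β) := by
    have := cmul' hcf hc hβ
    rwa [e] at this
  have h2 : Rz Z (β⁻¹ * α * β + β) (α + β) :=
    rz_trans hZ h1 (rz_symm hZ (cmul hcf hα hβ))
  unfold Rz at h2 ⊢
  have e2 : -(β⁻¹ * α * β + β) + (α + β) = -β + (-(β⁻¹ * α * β) + α) + β := by
    simp only [neg_add_rev, add_assoc]
  rw [e2] at h2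
  have := hZ.add_conj_mem hβ h2
  have e3 : β + (-β + (-(β⁻¹ * α * β) + α) + β) + -β = -(β⁻¹ * α * β) + α := by
    simp only [add_assoc, neg_add_cancel_left, add_neg_cancel_left, add_neg_cancel, add_zero]
  rwa [e3] at this

end Central

end Aux5
section Aux6

variable {B : Type u} [SkewBrace B]
variable {S Z L₁ : Set B}

lemma addClosure_subset {L : Set B} (hL : IsSubbrace L) {X : Set B} (hX : X ⊆ L) :
    (AddSubgroup.closure X : Set B) ⊆ L := by
  let G : AddSubgroup B :=
    { carrier := L
      add_mem' := fun ha hb => hL.add_mem ha hb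
      zero_mem' := hL.zero_mem
      neg_mem' := fun ha => hL.neg_mem ha }
  exact (AddSubgroup.closure_le G).mpr hX

lemma mod_smul {y : B} {n : ℕ} (hy0 : n • y = 0) (k : ℕ) : (k % n) • y = k • y := by
  have e : k • y = (n * (k / n) + k % n) • y := by rw [Nat.div_add_mod]
  rw [e, add_nsmul, mul_nsmul, hy0, smul_zero, zero_add]

lemma neg_smul_mod {y : B} {n : ℕ} (hn : 0 < n) (hy0 : n • y = 0) {k : ℕ} (hk : k < n) :
    -(k • y) = ((n - k) % n) • y := by
  have h1 : k • y + (n - k) • y = 0 := by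
    rw [← add_nsmul, Nat.add_sub_cancel' (le_of_lt hk), hy0]
  rw [mod_smul hy0]
  exact neg_eq_of_add_eq_zero_right h1

lemma fgcentral (hsub : IsSubbrace S) (hZ : IsIdealIn S Z) (hL1 : IsIdealIn S L₁)
    (hcf : IsCentralFactorIn S Z L₁) :
    ∀ l : List B, (∀ y ∈ l, y ∈ L₁ ∧ y ∈ addTorsion B) →
    ∃ F : Set B, F.Finite ∧ F ⊆ S ∧
      ∀ c ∈ (AddSubgroup.closure {x : B | x ∈ l} : Set B), ∃ f ∈ F, Rz Z f c := by
  intro l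
  induction l with
  | nil =>
      intro _
      refine ⟨{0}, Set.finite_singleton 0, by simpa using hsub.zero_mem, ?_⟩
      intro c hc
      have e : {x : B | x ∈ ([] : List B)} = (∅ : Set B) := by simp
      rw [e, AddSubgroup.closure_empty] at hc
      exact ⟨0, rfl, by rw [AddSubgroup.mem_bot.mp hc]; exact rz_refl hZ 0⟩
  | cons y l ih =>
      intro hall
      obtain ⟨F', hF'fin, hF'S, hF'cov⟩ := ih (fun z hz => hall z (List.mem_cons_of_mem y hz))
      have hy := hall y List.mem_cons_self
      obtain ⟨n, hn, hy0⟩ := hy.2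
      have hyL : y ∈ L₁ := hy.1
      have hyS : y ∈ S := hL1.subset hyL
      have hsetins : {x : B | x ∈ y :: l} = insert y {x : B | x ∈ l} := by
        ext x; simp [List.mem_cons]
      have hclsubL : (AddSubgroup.closure {x : B | x ∈ l} : Set B) ⊆ L₁ :=
        addClosure_subset hL1.isSubbrace (fun z hz => (hall z (List.mem_cons_of_mem y hz)).1)
      have hclsubS : (AddSubgroup.closure {x : B | x ∈ l} : Set B) ⊆ S :=
        fun z hz => hL1.subset (hclsubL hz)
      have main : ∀ c ∈ AddSubgroup.closure (insert y {x : B | x ∈ l}),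
          ∃ k : ℕ, k < n ∧ ∃ c', c' ∈ AddSubgroup.closure {x : B | x ∈ l} ∧
            Rz Z (k • y + c') c := by
        intro c hc
        induction hc using AddSubgroup.closure_induction with
        | mem x hx =>
            rcases hx with rfl | hx
            · refine ⟨1 % n, Nat.mod_lt _ hn, 0, AddSubgroup.zero_mem _, ?_⟩
              refine rz_of_eq hZ ?_
              rw [add_zero, mod_smul hy0, one_nsmul]
            · refine ⟨0, hn, x, AddSubgroup.subset_closure hx, ?_⟩
              refine rz_of_eq hZ ?_
              rw [zero_nsmul, zero_add]
        | zero =>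
            refine ⟨0, hn, 0, AddSubgroup.zero_mem _, ?_⟩
            refine rz_of_eq hZ (by rw [zero_nsmul, zero_add])
        | add c d hcmem hdmem ihc ihd =>
            obtain ⟨k, hk, c', hc', hrc⟩ := ihc
            obtain ⟨k₂, hk₂, d', hd', hrd⟩ := ihd
            have hA₂L : k₂ • y ∈ L₁ := hL1.isSubbrace.nsmul_mem hyL k₂
            have hc'S : c' ∈ S := hclsubS hc'
            have hd'S : d' ∈ S := hclsubS hd'
            have hA₂S : k₂ • y ∈ S := hL1.subset hA₂L
            refine ⟨(k + k₂) % n, Nat.mod_lt _ hn, c' + d', AddSubgroup.add_mem _ hc' hd', ?_⟩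
            have e1 : ((k + k₂) % n) • y + (c' + d') = k • y + (k₂ • y + (c' + d')) := by
              rw [mod_smul hy0, add_nsmul]
              simp only [add_assoc]
            have h2 : Rz Z (k₂ • y + (c' + d')) (c' + (k₂ • y + d')) := by
              have hmid := rz_addr hsub hZ (ccomm hcf hA₂L hc'S) hd'S
              exact rz_trans hZ (rz_of_eq hZ (add_assoc _ _ _).symm)
                (rz_trans hZ hmid (rz_of_eq hZ (add_assoc _ _ _)))
            have h3 : Rz Z (k • y + (c' + (k₂ • y + d'))) (c + d) := by
              have := rz_add hsub hZ hrc hrd (hsub.add_mem hA₂S hd'S)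
              refine rz_trans hZ (rz_of_eq hZ ?_) this
              rw [add_assoc]
            exact rz_trans hZ (rz_of_eq hZ e1) (rz_trans hZ (rz_addl hZ h2) h3)
        | neg c hcmem ihc =>
            obtain ⟨k, hk, c', hc', hrc⟩ := ihc
            have hc'S : c' ∈ S := hclsubS hc'
            have hAL : k • y ∈ L₁ := hL1.isSubbrace.nsmul_mem hyL k
            have hAS : k • y ∈ S := hL1.subset hAL
            refine ⟨(n - k) % n, Nat.mod_lt _ hn, -c', AddSubgroup.neg_mem _ hc', ?_⟩
            have e1 : ((n - k) % n) • y + -c' = -(k • y) + -c' := by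
              rw [← neg_smul_mod hn hy0 hk]
            have h2 : Rz Z (-(k • y) + -c') (-c' + -(k • y)) :=
              ccomm hcf (hL1.isSubbrace.neg_mem hAL) (hsub.neg_mem hc'S)
            have h3 : Rz Z (-c' + -(k • y)) (-c) := by
              have := rz_neg hZ hrc (hsub.add_mem hAS hc'S)
              refine rz_trans hZ (rz_of_eq hZ ?_) this
              rw [neg_add_rev]
            exact rz_trans hZ (rz_of_eq hZ e1) (rz_trans hZ h2 h3)
      refine ⟨(fun p : ℕ × B => p.1 • y + p.2) '' ({k | k < n} ×ˢ F'),
        (Set.Finite.prod (Set.finite_lt_nat n) hF'fin).image _, ?_, ?_⟩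
      · rintro f ⟨⟨k, f'⟩, ⟨_, hf'⟩, rfl⟩
        exact hsub.add_mem (hsub.nsmul_mem hyS k) (hF'S hf')
      · intro c hc
        rw [hsetins] at hc
        obtain ⟨k, hk, c', hc', hrc⟩ := main c hc
        obtain ⟨f', hf', hrf'⟩ := hF'cov c' hc'
        refine ⟨k • y + f', ⟨⟨k, f'⟩, ⟨hk, hf'⟩, rfl⟩, ?_⟩
        refine rz_trans hZ ?_ hrc
        unfold Rz
        have e : -(k • y + f') + (k • y + c') = -f' + c' := by
          simp only [neg_add_rev, add_assoc, neg_add_cancel_left]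
        rw [e]
        exact hrf'
      done

end Aux6
section Aux7

variable {B : Type u} [SkewBrace B]

lemma relfin : ∀ (m : ℕ) (S : Set B) (L : ℕ → Set B), IsSubbrace S → L m = S →
    (∀ k ≤ m, IsIdealIn S (L k)) →
    (∀ k < m, L k ⊆ L (k+1)) →
    (∀ k < m, IsCentralFactorIn S (L k) (L (k+1))) →
    (∀ b : B, b ∈ addTorsion B) →
    ∀ E : Set B, E.Finite → E ⊆ S →
    ∃ F : Set B, F.Finite ∧ ∀ u ∈ subbraceClosure E, ∃ w ∈ F, -w + u ∈ L 0 := by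
  intro m
  induction m with
  | zero =>
      intro S L hsub hLm hid _ _ _ E hEfin hES
      refine ⟨{0}, Set.finite_singleton 0, ?_⟩
      intro u hu
      refine ⟨0, rfl, ?_⟩
      rw [neg_zero, zero_add, hLm]
      exact subbraceClosure_le hsub hES hu
  | succ m ih =>
      intro S L hsub hLm hid hmono hcent hper E hEfin hES
      classical
      obtain ⟨F₁, hF₁fin, hF₁cov⟩ := ih S (fun k => L (k+1)) hsub hLm
        (fun k hk => hid (k+1) (Nat.succ_le_succ hk))
        (fun k hk => hmono (k+1) (Nat.succ_lt_succ hk))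
        (fun k hk => hcent (k+1) (Nat.succ_lt_succ hk)) hper E hEfin hES
      set V := subbraceClosure E with hVdef
      have hVsub : IsSubbrace V := subbraceClosure_isSubbrace E
      have hVS : V ⊆ S := subbraceClosure_le hsub hES
      have hEV : E ⊆ V := subset_subbraceClosure E
      have hZ : IsIdealIn S (L 0) := hid 0 (Nat.zero_le _)
      have hL1 : IsIdealIn S (L 1) := hid 1 (Nat.succ_le_succ (Nat.zero_le m))
      have hcf : IsCentralFactorIn S (L 0) (L 1) := hcent 0 (Nat.succ_pos m)
      have hL1sub : IsSubbrace (L 1) := hL1.isSubbrace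
      -- normalized transversal F₂ ⊆ V
      set sel : B → B := fun v => if h : ∃ w ∈ V, -v + w ∈ L 1 then h.choose else 0
        with hseldef
      set F₂ : Set B := insert 0 (sel '' F₁) with hF₂def
      have hF₂fin : F₂.Finite := Set.Finite.insert 0 (hF₁fin.image sel)
      have hF₂V : F₂ ⊆ V := by
        rintro w (rfl | ⟨v, hv, rfl⟩)
        · exact hVsub.zero_mem
        · by_cases h : ∃ w ∈ V, -v + w ∈ L 1
          · rw [hseldef]; simp only [dif_pos h]
            exact h.choose_spec.1
          · rw [hseldef]; simp only [dif_neg h]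
            exact hVsub.zero_mem
      have hzeroF₂ : (0 : B) ∈ F₂ := Set.mem_insert 0 _
      have hcov₂ : ∀ u ∈ V, ∃ w ∈ F₂, -w + u ∈ L 1 := by
        intro u hu
        obtain ⟨v, hv, hvu⟩ := hF₁cov u hu
        have h : ∃ w ∈ V, -v + w ∈ L 1 := ⟨u, hu, hvu⟩
        refine ⟨sel v, Set.mem_insert_of_mem _ ⟨v, hv, rfl⟩, ?_⟩
        rw [hseldef]; simp only [dif_pos h]
        obtain ⟨hwV, hwL⟩ := h.choose_spec
        have e : -h.choose + u = -(-v + h.choose) + (-v + u) := by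
          simp only [neg_add_rev, neg_neg, add_assoc, neg_add_cancel_left,
            add_neg_cancel_left]
        rw [e]
        exact hL1sub.add_mem (hL1sub.neg_mem hwL) hvu
      -- defect decomposition
      set wv : B → B := fun u => if h : ∃ w ∈ F₂, -w + u ∈ L 1 then h.choose else 0
        with hwvdef
      set cv : B → B := fun u => -wv u + u with hcvdef
      have hwv : ∀ u ∈ V, wv u ∈ F₂ ∧ cv u ∈ L 1 := by
        intro u hu
        have h : ∃ w ∈ F₂, -w + u ∈ L 1 := hcov₂ u hu
        constructor
        · rw [hwvdef]; simp only [dif_pos h]; exact h.choose_spec.1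
        · rw [hcvdef, hwvdef]; simp only [dif_pos h]; exact h.choose_spec.2
      have hdecomp : ∀ u : B, wv u + cv u = u := by
        intro u; rw [hcvdef, add_neg_cancel_left]
      have hcvV : ∀ u ∈ V, cv u ∈ V := by
        intro u hu
        rw [hcvdef]
        exact hVsub.add_mem (hVsub.neg_mem (hF₂V (hwv u hu).1)) hu
      -- generating defects
      set G₀ : Set B := (fun p : B × B => p.1 + p.2) '' (F₂ ×ˢ F₂) ∪
        ((fun p : B × B => p.1 * p.2) '' (F₂ ×ˢ F₂) ∪
        (Neg.neg '' F₂ ∪ (Inv.inv '' F₂ ∪ E))) with hG₀def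
      have hG₀fin : G₀.Finite := by
        refine Set.Finite.union ((hF₂fin.prod hF₂fin).image _) ?_
        refine Set.Finite.union ((hF₂fin.prod hF₂fin).image _) ?_
        exact Set.Finite.union (hF₂fin.image _) (Set.Finite.union (hF₂fin.image _) hEfin)
      have hG₀V : G₀ ⊆ V := by
        rintro x (⟨⟨a, b⟩, ⟨ha, hb⟩, rfl⟩ | (⟨⟨a, b⟩, ⟨ha, hb⟩, rfl⟩ | (⟨a, ha, rfl⟩ | (⟨a, ha, rfl⟩ | hx))))
        · exact hVsub.add_mem (hF₂V ha) (hF₂V hb)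
        · exact hVsub.mul_mem (hF₂V ha) (hF₂V hb)
        · exact hVsub.neg_mem (hF₂V ha)
        · exact hVsub.inv_mem (hF₂V ha)
        · exact hEV hx
      set Y : Set B := cv '' G₀ with hYdef
      have hYfin : Y.Finite := hG₀fin.image cv
      have hYL1 : Y ⊆ L 1 := by
        rintro y ⟨g, hg, rfl⟩
        exact (hwv g (hG₀V hg)).2
      set C : AddSubgroup B := AddSubgroup.closure Y with hCdef
      have hCL1 : (C : Set B) ⊆ L 1 := addClosure_subset hL1sub hYL1
      have hCS : (C : Set B) ⊆ S := fun z hz => hL1.subset (hCL1 hz)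
      -- the covering subbrace
      set U : Set B := {u : B | ∃ w ∈ F₂, ∃ c ∈ C, Rz (L 0) (w + c) u} with hUdef
      have hmemS : ∀ w ∈ F₂, ∀ c ∈ C, w + c ∈ S := fun w hw c hc =>
        hsub.add_mem (hVS (hF₂V hw)) (hCS hc)
      have hG₀mem : ∀ g ∈ G₀, cv g ∈ C := fun g hg =>
        AddSubgroup.subset_closure ⟨g, hg, rfl⟩
      have husub : IsSubbrace U := by
        constructor
        · exact ⟨0, hzeroF₂, 0, C.zero_mem, rz_of_eq hZ (by rw [add_zero])⟩
        · -- addition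
          rintro u u' ⟨w, hw, c, hc, h⟩ ⟨w', hw', c', hc', h'⟩
          have hsG₀ : w + w' ∈ G₀ := Or.inl ⟨⟨w, w'⟩, ⟨hw, hw'⟩, rfl⟩
          have hwS : w ∈ S := hVS (hF₂V hw)
          have hw'S : w' ∈ S := hVS (hF₂V hw')
          have hcL : c ∈ L 1 := hCL1 hc
          have hcS : c ∈ S := hCS hc
          have hc'S : c' ∈ S := hCS hc'
          refine ⟨wv (w + w'), (hwv _ (hG₀V hsG₀)).1, cv (w + w') + (c + c'),
            C.add_mem (hG₀mem _ hsG₀) (C.add_mem hc hc'), ?_⟩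
          have e1 : wv (w + w') + (cv (w + w') + (c + c')) = (w + w') + (c + c') := by
            rw [← add_assoc, hdecomp]
          have h2 : Rz (L 0) (w' + (c + c')) (c + (w' + c')) := by
            have hmid := rz_addr hsub hZ (rz_symm hZ (ccomm hcf hcL hw'S)) hc'S
            exact rz_trans hZ (rz_of_eq hZ (add_assoc _ _ _).symm)
              (rz_trans hZ hmid (rz_of_eq hZ (add_assoc _ _ _)))
          have h3 : Rz (L 0) ((w + c) + (w' + c')) (u + u') :=
            rz_add hsub hZ h h' (hsub.add_mem hw'S hc'S)
          refine rz_trans hZ (rz_of_eq hZ e1) (rz_trans hZ (rz_of_eq hZ (add_assoc _ _ _))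
            (rz_trans hZ (rz_addl hZ h2) (rz_trans hZ (rz_of_eq hZ (add_assoc _ _ _).symm) h3)))
        · -- negation
          rintro u ⟨w, hw, c, hc, h⟩
          have hsG₀ : -w ∈ G₀ := Or.inr (Or.inr (Or.inl ⟨w, hw, rfl⟩))
          have hwS : w ∈ S := hVS (hF₂V hw)
          have hcL : c ∈ L 1 := hCL1 hc
          have hcS : c ∈ S := hCS hc
          refine ⟨wv (-w), (hwv _ (hG₀V hsG₀)).1, cv (-w) + -c,
            C.add_mem (hG₀mem _ hsG₀) (C.neg_mem hc), ?_⟩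
          have e1 : wv (-w) + (cv (-w) + -c) = -w + -c := by
            rw [← add_assoc, hdecomp]
          have h2 : Rz (L 0) (-w + -c) (-c + -w) :=
            rz_symm hZ (ccomm hcf (hL1sub.neg_mem hcL) (hsub.neg_mem hwS))
          have h3 : Rz (L 0) (-(w + c)) (-u) := rz_neg hZ h (hsub.add_mem hwS hcS)
          refine rz_trans hZ (rz_of_eq hZ e1) (rz_trans hZ h2
            (rz_trans hZ (rz_of_eq hZ (neg_add_rev w c).symm) h3))
        · -- multiplication
          rintro u u' ⟨w, hw, c, hc, h⟩ ⟨w', hw', c', hc', h'⟩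
          have hsG₀ : w * w' ∈ G₀ := Or.inr (Or.inl ⟨⟨w, w'⟩, ⟨hw, hw'⟩, rfl⟩)
          have hwS : w ∈ S := hVS (hF₂V hw)
          have hw'S : w' ∈ S := hVS (hF₂V hw')
          have hcL : c ∈ L 1 := hCL1 hc
          have hc'L : c' ∈ L 1 := hCL1 hc'
          have hcS : c ∈ S := hCS hc
          have hc'S : c' ∈ S := hCS hc'
          have hc₁L : lam w⁻¹ c ∈ L 1 := hL1.lam_mem (hsub.inv_mem hwS) hcL
          have hc₁'L : lam w'⁻¹ c' ∈ L 1 := hL1.lam_mem (hsub.inv_mem hw'S) hc'L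
          have hc₂L : w'⁻¹ * lam w⁻¹ c * w' ∈ L 1 := hL1.mul_conj_mem' hsub hw'S hc₁L
          have e6 : (w + c) * (w' + c') =
              (w * w') * ((w'⁻¹ * lam w⁻¹ c * w') * lam w'⁻¹ c') := by
            rw [add_eq_mul_lam_inv w c, add_eq_mul_lam_inv w' c']
            group
          have h9 : Rz (L 0) (w'⁻¹ * lam w⁻¹ c * w') (lam w⁻¹ c) :=
            cmconj hsub hL1 hZ hcf hc₁L hw'S
          have h10 : Rz (L 0) (lam w⁻¹ c) c :=
            rz_symm hZ (clam hZ hcf hcL (hsub.inv_mem hwS))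
          have h11 : Rz (L 0) (lam w'⁻¹ c') c' :=
            rz_symm hZ (clam hZ hcf hc'L (hsub.inv_mem hw'S))
          have h12 : Rz (L 0) ((w'⁻¹ * lam w⁻¹ c * w') + lam w'⁻¹ c') (c + c') :=
            rz_add hsub hZ (rz_trans hZ h9 h10) h11 (hL1.subset hc₁'L)
          have h8 : Rz (L 0) ((w'⁻¹ * lam w⁻¹ c * w') + lam w'⁻¹ c')
              ((w'⁻¹ * lam w⁻¹ c * w') * lam w'⁻¹ c') :=
            cmul hcf hc₂L (hL1.subset hc₁'L)
          have h7 : Rz (L 0) ((w * w') + ((w'⁻¹ * lam w⁻¹ c * w') * lam w'⁻¹ c'))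
              ((w * w') * ((w'⁻¹ * lam w⁻¹ c * w') * lam w'⁻¹ c')) := by
            have hα : (w'⁻¹ * lam w⁻¹ c * w') * lam w'⁻¹ c' ∈ L 1 :=
              hL1sub.mul_mem hc₂L hc₁'L
            have := cmul' hcf hα (hsub.mul_mem hwS hw'S)
            exact rz_trans hZ (rz_trans hZ
              (rz_symm hZ (ccomm hcf hα (hsub.mul_mem hwS hw'S))) this) (rz_refl hZ _)
          have h5 : Rz (L 0) ((w + c) * (w' + c')) (u * u') :=
            rz_mul hsub hZ h h' (hsub.add_mem hwS hcS) (hsub.add_mem hw'S hc'S)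
          refine ⟨wv (w * w'), (hwv _ (hG₀V hsG₀)).1, cv (w * w') + (c + c'),
            C.add_mem (hG₀mem _ hsG₀) (C.add_mem hc hc'), ?_⟩
          have e1 : wv (w * w') + (cv (w * w') + (c + c')) = (w * w') + (c + c') := by
            rw [← add_assoc, hdecomp]
          refine rz_trans hZ (rz_of_eq hZ e1) ?_
          refine rz_trans hZ (rz_addl hZ (rz_trans hZ (rz_symm hZ h12) h8)) ?_
          refine rz_trans hZ h7 ?_
          refine rz_trans hZ (rz_of_eq hZ e6.symm) h5
        · -- inverse
          rintro u ⟨w, hw, c, hc, h⟩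
          have hsG₀ : w⁻¹ ∈ G₀ := Or.inr (Or.inr (Or.inr (Or.inl ⟨w, hw, rfl⟩)))
          have hwS : w ∈ S := hVS (hF₂V hw)
          have hcL : c ∈ L 1 := hCL1 hc
          have hcS : c ∈ S := hCS hc
          have hc₁L : lam w⁻¹ c ∈ L 1 := hL1.lam_mem (hsub.inv_mem hwS) hcL
          have hc₅L : w * (lam w⁻¹ c)⁻¹ * w⁻¹ ∈ L 1 :=
            hL1.mul_conj_mem hwS (hL1sub.inv_mem hc₁L)
          have e5 : (w + c)⁻¹ = w⁻¹ * (w * (lam w⁻¹ c)⁻¹ * w⁻¹) := by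
            rw [add_eq_mul_lam_inv w c]
            group
          have hA : Rz (L 0) (w * (lam w⁻¹ c)⁻¹ * w⁻¹) (lam w⁻¹ c)⁻¹ := by
            have := cmconj hsub hL1 hZ hcf (hL1sub.inv_mem hc₁L) (hsub.inv_mem hwS)
            rwa [inv_inv] at this
          have hB2 : Rz (L 0) ((lam w⁻¹ c)⁻¹) (-(lam w⁻¹ c)) :=
            rz_symm hZ (cinv hsub hL1 hZ hcf hc₁L)
          have hC2 : Rz (L 0) (-(lam w⁻¹ c)) (-c) :=
            rz_neg hZ (rz_symm hZ (clam hZ hcf hcL (hsub.inv_mem hwS))) (hL1.subset hc₁L)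
          have hneg : Rz (L 0) (-c) (w * (lam w⁻¹ c)⁻¹ * w⁻¹) :=
            rz_symm hZ (rz_trans hZ hA (rz_trans hZ hB2 hC2))
          refine ⟨wv w⁻¹, (hwv _ (hG₀V hsG₀)).1, cv w⁻¹ + -c,
            C.add_mem (hG₀mem _ hsG₀) (C.neg_mem hc), ?_⟩
          have e1 : wv w⁻¹ + (cv w⁻¹ + -c) = w⁻¹ + -c := by
            rw [← add_assoc, hdecomp]
          refine rz_trans hZ (rz_of_eq hZ e1) ?_
          refine rz_trans hZ (rz_addl hZ hneg) ?_
          have hcm : Rz (L 0) (w⁻¹ + (w * (lam w⁻¹ c)⁻¹ * w⁻¹))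
              (w⁻¹ * (w * (lam w⁻¹ c)⁻¹ * w⁻¹)) := by
            have := cmul' hcf hc₅L (hsub.inv_mem hwS)
            exact rz_trans hZ (rz_symm hZ (ccomm hcf hc₅L (hsub.inv_mem hwS))) this
          refine rz_trans hZ hcm ?_
          refine rz_trans hZ (rz_of_eq hZ e5.symm) (rz_inv hsub hZ h (hsub.add_mem hwS hcS))
      -- E is covered
      have hEU : E ⊆ U := by
        intro e he
        have heG₀ : e ∈ G₀ := Or.inr (Or.inr (Or.inr (Or.inr he)))
        refine ⟨wv e, (hwv _ (hG₀V heG₀)).1, cv e, hG₀mem _ heG₀, ?_⟩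
        exact rz_of_eq hZ (hdecomp e)
      have hVU : V ⊆ U := subbraceClosure_le husub hEU
      -- finite covering of C modulo L 0
      obtain ⟨FC, hFCfin, _, hFCcov⟩ := fgcentral hsub hZ hL1 hcf hYfin.toFinset.toList
        (by
          intro y hy
          have : y ∈ Y := by
            rwa [← Set.Finite.mem_toFinset hYfin, ← Finset.mem_toList]
          exact ⟨hYL1 this, hper y⟩)
      have hClosEq : AddSubgroup.closure {x : B | x ∈ hYfin.toFinset.toList} = C := by
        rw [hCdef]
        congr 1
        ext x
        simp [Set.Finite.mem_toFinset]
      refine ⟨(fun p : B × B => p.1 + p.2) '' (F₂ ×ˢ FC), (hF₂fin.prod hFCfin).image _, ?_⟩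
      intro u hu
      obtain ⟨w, hw, c, hc, hrz⟩ := hVU hu
      obtain ⟨f, hf, hrf⟩ := hFCcov c (by rw [hClosEq]; exact hc)
      refine ⟨w + f, ⟨⟨w, f⟩, ⟨hw, hf⟩, rfl⟩, ?_⟩
      have step : Rz (L 0) (w + f) (w + c) := by
        unfold Rz
        have e : -(w + f) + (w + c) = -f + c := by
          simp only [neg_add_rev, add_assoc, neg_add_cancel_left]
        rw [e]; exact hrf
      exact rz_trans hZ step hrz

end Aux7

end SkewBrace

open SkewBrace

/-- Torsion theory of locally centrally-nilpotent braces. -/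
theorem torsion_theory {B : Type u} [SkewBrace B] (hB : LocallyCentrallyNilpotent B) :
    addTorsion B = mulTorsion B ∧
    IsIdeal (addTorsion B) ∧
    (∀ a : B, (∃ n : ℕ, 0 < n ∧ n • a ∈ addTorsion B) → a ∈ addTorsion B) ∧
    ((∀ b : B, (subbraceClosure ({b} : Set B)).Finite) →
      ∀ E : Finset B, (subbraceClosure (E : Set B)).Finite) := by
  classical
  -- grand conclusions for the subbrace generated by two elements
  have grandS : ∀ a b : B, ∃ S : Set B, IsSubbrace S ∧ a ∈ S ∧ b ∈ S ∧
      (∀ x ∈ S, ∀ y ∈ S, x ∈ addTorsion B → y ∈ addTorsion B → x + y ∈ addTorsion B) ∧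
      (∀ x ∈ S, (x ∈ addTorsion B ↔ x ∈ mulTorsion B)) ∧
      (∀ x ∈ S, x ∈ addTorsion B → ∀ y ∈ S, sbStar x y ∈ addTorsion B) := by
    intro a b
    obtain ⟨m, hm⟩ := hB {a, b}
    have hcoe : ((({a, b} : Finset B) : Set B)) = ({a, b} : Set B) := by simp
    rw [hcoe] at hm
    have hsub := subbraceClosure_isSubbrace ({a, b} : Set B)
    obtain ⟨h1, h2, h3⟩ := grand m _ hsub hm
    exact ⟨subbraceClosure {a, b}, hsub,
      subset_subbraceClosure _ (by simp), subset_subbraceClosure _ (by simp), h1, h2, h3⟩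
  have part1 : addTorsion B = mulTorsion B := by
    ext a
    obtain ⟨S, hS, haS, _, _, h2, _⟩ := grandS a a
    exact h2 a haS
  have addT_mul : ∀ a b : B, a ∈ addTorsion B → b ∈ addTorsion B →
      a * b ∈ addTorsion B := by
    intro a b ha hb
    obtain ⟨S, hS, haS, hbS, h1, _, _⟩ := grandS a b
    rw [mul_eq_add_lam]
    exact h1 a haS (lam a b) (hS.lam_mem haS hbS) ha (addT_lam a hb)
  have addT_add : ∀ a b : B, a ∈ addTorsion B → b ∈ addTorsion B →
      a + b ∈ addTorsion B := by
    intro a b ha hb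
    obtain ⟨S, hS, haS, hbS, h1, _, _⟩ := grandS a b
    exact h1 a haS b hbS ha hb
  have addT_inv : ∀ a : B, a ∈ addTorsion B → a⁻¹ ∈ addTorsion B := by
    intro a ha
    obtain ⟨S, hS, haS, _, _, h2, _⟩ := grandS a a
    exact (h2 a⁻¹ (hS.inv_mem haS)).mpr (mulT_inv ((h2 a haS).mp ha))
  have part2 : IsIdeal (addTorsion B) := by
    refine ⟨Set.subset_univ _, ⟨addT_zero, ?_, fun a => addT_neg, ?_, ?_⟩, ?_, ?_, ?_, ?_⟩
    · exact fun a b ha hb => addT_add a b ha hb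
    · exact fun a b ha hb => addT_mul a b ha hb
    · exact fun a ha => addT_inv a ha
    · exact fun b _ a ha => addT_conj b ha
    · intro b _ a ha
      obtain ⟨S, hS, haS, hbS, _, h2, _⟩ := grandS a b
      exact (h2 _ (hS.mul_mem (hS.mul_mem hbS haS) (hS.inv_mem hbS))).mpr
        (mulT_conj b ((h2 a haS).mp ha))
    · intro b _ a ha
      rw [sbStar_eq]
      exact addT_add _ _ (addT_lam b ha) (addT_neg ha)
    · intro a ha b _
      obtain ⟨S, _, haS, hbS, _, _, h3⟩ := grandS a b
      exact h3 a haS ha b hbS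
  have part3 : ∀ a : B, (∃ n : ℕ, 0 < n ∧ n • a ∈ addTorsion B) → a ∈ addTorsion B := by
    rintro a ⟨n, hn, h⟩
    exact addT_div n hn h
  refine ⟨part1, part2, part3, ?_⟩
  intro hper E
  have hperT : ∀ b : B, b ∈ addTorsion B := by
    intro b
    by_contra h0
    have hmem : ∀ n : ℕ, n • b ∈ subbraceClosure ({b} : Set B) :=
      fun n => (subbraceClosure_isSubbrace ({b} : Set B)).nsmul_mem
        (subset_subbraceClosure _ (Set.mem_singleton b)) n
    have hinj : Function.Injective (fun n : ℕ => n • b) := by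
      intro i j hij
      by_contra hne
      rcases Nat.lt_or_ge i j with hlt | hge
      · have : (j - i) • b = 0 := by
          have e : j • b = i • b + (j - i) • b := by
            rw [← add_nsmul, Nat.add_sub_cancel' (le_of_lt hlt)]
          simp only at hij
          rw [← hij] at e
          exact (add_eq_left.mp e.symm)
        exact h0 ⟨j - i, Nat.sub_pos_of_lt hlt, this⟩
      · have hlt' : j < i := Nat.lt_of_le_of_ne hge (fun h => hne h.symm)
        have : (i - j) • b = 0 := by
          have e : i • b = j • b + (i - j) • b := by
            rw [← add_nsmul, Nat.add_sub_cancel' (le_of_lt hlt')]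
          simp only at hij
          rw [hij] at e
          exact (add_eq_left.mp e.symm)
        exact h0 ⟨i - j, Nat.sub_pos_of_lt hlt', this⟩
    exact (Set.infinite_of_injective_forall_mem hinj hmem) (hper b)
  obtain ⟨m, hm⟩ := hB E
  obtain ⟨I, hc⟩ := ChainCtx.ofClassLE (subbraceClosure_isSubbrace _) hm
  obtain ⟨F, hFfin, hFcov⟩ := relfin m _ I hc.hsub hc.hm hc.hid hc.hmono hc.hcent hperT
    (E : Set B) (Finset.finite_toSet E) (subset_subbraceClosure _)
  apply hFfin.subset
  intro u hu
  obtain ⟨w, hw, hwu⟩ := hFcov u hu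
  rw [hc.h0, Set.mem_singleton_iff] at hwu
  have : u = w := by
    have := congrArg (fun z => w + z) hwu
    simpa [add_neg_cancel_left] using this
  rwa [this]
end

section
/- Let B be a left skew brace whose additive group (B,+) and multiplicative group (B,·) are both cyclic. Then there exists an element x ∈ B that generates both (B,+) and (B,·). -/
universe u

open SkewBrace

/-- If both groups of a brace are cyclic, they have a common generator. -/
theorem cyclic_common_generator {B : Type u} [SkewBrace B]
    (hadd : ∃ g : B, ∀ x : B, x ∈ AddSubgroup.zmultiples g)
    (hmul : ∃ g : B, ∀ x : B, x ∈ Subgroup.zpowers g) :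
    ∃ x : B, (∀ y : B, y ∈ AddSubgroup.zmultiples x) ∧ ∀ y : B, y ∈ Subgroup.zpowers x := by
  obtain ⟨g, hg⟩ := hadd
  obtain ⟨h, hh⟩ := hmul
  have lam : ∀ a x : B, ∃ m : ℤ, -a + a * x = m • x := by
    intro a x
    let L : B →+ B := AddMonoidHom.mk' (fun x => -a + a * x) (by
      intro b c
      simp only [SkewBrace.skew_distrib a b c]
      rw [← add_assoc])
    obtain ⟨m, hm⟩ := AddSubgroup.mem_zmultiples_iff.mp (hg (L g))
    obtain ⟨k, hk⟩ := AddSubgroup.mem_zmultiples_iff.mp (hg x)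
    refine ⟨m, ?_⟩
    show L x = m • x
    calc L x = L (k • g) := by rw [hk]
      _ = k • L g := map_zsmul L k g
      _ = k • (m • g) := by rw [← hm]
      _ = (k * m) • g := (mul_zsmul g k m).symm
      _ = (m * k) • g := by rw [mul_comm]
      _ = m • (k • g) := mul_zsmul g m k
      _ = m • x := by rw [hk]
  refine ⟨h, fun y => ?_, hh⟩
  let K : Subgroup B :=
    { carrier := (AddSubgroup.zmultiples h : Set B)
      one_mem' := by
        show (1 : B) ∈ AddSubgroup.zmultiples h
        rw [← SkewBrace.zero_eq_one]
        exact AddSubgroup.zero_mem _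
      mul_mem' := by
        intro a b ha hb
        obtain ⟨m, hm⟩ := lam a b
        show a * b ∈ AddSubgroup.zmultiples h
        have hab : a * b = a + m • b := by
          rw [← hm, add_neg_cancel_left]
        rw [hab]
        exact AddSubgroup.add_mem _ ha (AddSubgroup.zsmul_mem _ hb m)
      inv_mem' := by
        intro a ha
        obtain ⟨m, hm⟩ := lam a⁻¹ a
        show a⁻¹ ∈ AddSubgroup.zmultiples h
        have h1 : a⁻¹ * a = (0 : B) := by rw [inv_mul_cancel, SkewBrace.zero_eq_one]
        have h2 : a⁻¹ = -(m • a) := by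
          rw [← hm, h1, add_zero, neg_neg]
        rw [h2]
        exact AddSubgroup.neg_mem _ (AddSubgroup.zsmul_mem _ ha m) }
  have hK : Subgroup.zpowers h ≤ K :=
    Subgroup.zpowers_le.mpr (AddSubgroup.mem_zmultiples h)
  exact hK (hh y)
end
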